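/- arXiv:1703.08568 — 9 statements merged into one kernel-verified Lean document; each statement's English description precedes it below -/
import Mathlib

section
/- For any convex body K in ℝ^d and any two vectors x₁, x₂, the translates x₁ + K and x₂ + K have disjoint interiors if and only if the translates x₁ + K₀ and x₂ + K₀ of the Minkowski symmetrization K₀ = (1/2)(K − K) have disjoint interiors. -/
open scoped Pointwise

section aux

variable {E : Type*} [NormedAddCommGroup E] [NormedSpace ℝ E]

/-- For a convex set with nonempty interior, the interior of the difference body is the
difference of interiors. -/
lemma interior_sub_self_of_convex {K : Set E} (hconv : Convex ℝ K)
    (hint : (interior K).Nonempty) :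
    interior (K - K) = interior K - interior K := by
  obtain ⟨c, hc⟩ := hint
  apply Set.Subset.antisymm
  · intro z hz
    rcases Metric.isOpen_iff.1 isOpen_interior z hz with ⟨ε, hε, hball⟩
    by_cases hz0 : z = 0
    · exact ⟨c, hc, c, hc, by simp [hz0]⟩
    · have hzn : (0:ℝ) < ‖z‖ := norm_pos_iff.2 hz0
      set t : ℝ := ε / (2 * ‖z‖) with ht
      have htpos : 0 < t := div_pos hε (by positivity)
      have hmem : (1 + t) • z ∈ K - K := by
        have : (1 + t) • z ∈ Metric.ball z ε := by
          rw [Metric.mem_ball, dist_eq_norm]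
          have : (1 + t) • z - z = t • z := by
            rw [add_smul, one_smul]; abel
          rw [this, norm_smul, Real.norm_of_nonneg htpos.le, ht]
          rw [div_mul_eq_mul_div, mul_comm]
          rw [div_lt_iff₀ (by positivity)]
          nlinarith
        exact interior_subset (hball this)
      rcases Set.mem_sub.1 hmem with ⟨a, ha, b, hb, hab⟩
      have hs0 : (0:ℝ) < (1 + t)⁻¹ := by positivity
      have hs1 : (1 + t)⁻¹ < 1 := by
        rw [inv_lt_one_iff₀]; right; linarith
      set s : ℝ := (1 + t)⁻¹
      have hsum : s + (1 - s) = 1 := by ring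
      have ha' : s • a + (1 - s) • c ∈ interior K :=
        hconv.combo_closure_interior_mem_interior (subset_closure ha) hc hs0.le
          (by linarith) hsum
      have hb' : s • b + (1 - s) • c ∈ interior K :=
        hconv.combo_closure_interior_mem_interior (subset_closure hb) hc hs0.le
          (by linarith) hsum
      refine ⟨_, ha', _, hb', ?_⟩
      show s • a + (1 - s) • c - (s • b + (1 - s) • c) = z
      have heq : s • a + (1 - s) • c - (s • b + (1 - s) • c) = s • (a - b) := by
        rw [smul_sub]; abel
      rw [heq, hab, smul_smul]
      have : s * (1 + t) = 1 := inv_mul_cancel₀ (by positivity)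
      rw [this, one_smul]
  · have hopen : IsOpen (interior K - interior K) :=
      isOpen_interior.sub_right
    refine interior_maximal ?_ hopen
    exact Set.sub_subset_sub interior_subset interior_subset

lemma not_disjoint_vadd_iff (T : Set E) (x₁ x₂ : E) :
    ¬ Disjoint (x₁ +ᵥ T) (x₂ +ᵥ T) ↔ x₁ - x₂ ∈ T - T := by
  rw [Set.not_disjoint_iff]
  constructor
  · rintro ⟨p, ⟨a, ha, rfl⟩, ⟨b, hb, hba⟩⟩
    refine ⟨b, hb, a, ha, ?_⟩
    show b - a = x₁ - x₂
    have hba' : x₂ + b = x₁ + a := hba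
    linear_combination (norm := abel) hba'
  · rintro ⟨b, hb, a, ha, hba⟩
    refine ⟨x₁ + a, ⟨a, ha, rfl⟩, ⟨b, hb, ?_⟩⟩
    show x₂ + b = x₁ + a
    have hba' : b - a = x₁ - x₂ := hba
    linear_combination (norm := abel) hba'

end aux

/-- Minkowski's lemma (disjoint-interiors part): two translates of a convex body `K` have
disjoint interiors iff the corresponding translates of the Minkowski symmetrization
`K₀ = (1/2)(K - K)` have disjoint interiors. -/
theorem translates_disjoint_interior_iff_minkowskiSym {d : ℕ}
    (K : Set (EuclideanSpace ℝ (Fin d)))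
    (hconv : Convex ℝ K) (hcomp : IsCompact K) (hint : (interior K).Nonempty)
    (x₁ x₂ : EuclideanSpace ℝ (Fin d)) :
    Disjoint (interior (x₁ +ᵥ K)) (interior (x₂ +ᵥ K)) ↔
      Disjoint (interior (x₁ +ᵥ (2⁻¹ : ℝ) • (K - K)))
        (interior (x₂ +ᵥ (2⁻¹ : ℝ) • (K - K))) := by
  set D : Set (EuclideanSpace ℝ (Fin d)) := interior K - interior K with hD
  have hDconv : Convex ℝ D := (hconv.interior).sub (hconv.interior)
  have hintK0 : interior ((2⁻¹ : ℝ) • (K - K)) = (2⁻¹ : ℝ) • D := by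
    rw [interior_smul₀ (by norm_num : (2⁻¹:ℝ) ≠ 0),
      interior_sub_self_of_convex hconv hint]
  have hsmulsub : ∀ (c : ℝ) (s t : Set (EuclideanSpace ℝ (Fin d))),
      c • s - c • t = c • (s - t) := by
    intro c s t
    ext x
    simp only [Set.mem_smul_set, Set.mem_sub]
    constructor
    · rintro ⟨p, ⟨a, ha, rfl⟩, q, ⟨b, hb, rfl⟩, rfl⟩
      exact ⟨a - b, ⟨a, ha, b, hb, rfl⟩, smul_sub c a b⟩
    · rintro ⟨y, ⟨a, ha, b, hb, rfl⟩, rfl⟩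
      exact ⟨c • a, ⟨a, ha, rfl⟩, c • b, ⟨b, hb, rfl⟩, (smul_sub c a b).symm⟩
  have key : (2⁻¹ : ℝ) • D - (2⁻¹ : ℝ) • D = D := by
    rw [hsmulsub]
    have hsub : D - D = D + D := by
      ext z
      simp only [hD, Set.mem_sub, Set.mem_add]
      constructor
      · rintro ⟨a, ha, b, hb, rfl⟩
        rcases ha with ⟨p, hp, q, hq, rfl⟩
        rcases hb with ⟨r, hr, u, hu, rfl⟩
        exact ⟨p - r, ⟨p, hp, r, hr, rfl⟩, u - q, ⟨u, hu, q, hq, rfl⟩, by abel⟩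
      · rintro ⟨a, ha, b, hb, rfl⟩
        rcases ha with ⟨p, hp, q, hq, rfl⟩
        rcases hb with ⟨r, hr, u, hu, rfl⟩
        exact ⟨p - q, ⟨p, hp, q, hq, rfl⟩, u - r, ⟨u, hu, r, hr, rfl⟩, by abel⟩
    rw [hsub]
    have : D + D = ((1:ℝ) + 1) • D := by
      rw [hDconv.add_smul (by norm_num) (by norm_num)]
      simp
    rw [this, smul_smul]
    norm_num
  have L : ¬ Disjoint (interior (x₁ +ᵥ K)) (interior (x₂ +ᵥ K)) ↔ x₁ - x₂ ∈ D := by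
    rw [interior_vadd, interior_vadd, not_disjoint_vadd_iff]
  have R : ¬ Disjoint (interior (x₁ +ᵥ (2⁻¹ : ℝ) • (K - K)))
      (interior (x₂ +ᵥ (2⁻¹ : ℝ) • (K - K))) ↔ x₁ - x₂ ∈ D := by
    rw [interior_vadd, interior_vadd, hintK0, not_disjoint_vadd_iff, key]
  exact not_iff_not.mp (L.trans R.symm)
end

section
/- For any convex body K in ℝ^d and any two vectors x₁, x₂, the translates x₁ + K and x₂ + K touch (i.e., intersect but have disjoint interiors) if and only if x₁ + K₀ and x₂ + K₀ touch, where K₀ = (1/2)(K − K) is the Minkowski symmetrization of K. -/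
/-!
Translates `x₁ + A` and `x₂ + B` meet iff `x₂ - x₁ ∈ A - B`, and their interiors meet iff
`x₂ - x₁ ∈ int A - int B`. So two translates of `K` touch iff `x₂ - x₁ ∈ (K - K) \ (int K - int K)`.
For convex `K` with nonempty interior, `int K - int K = int (K - K)`, because `K - K` lies in the
closure of the open convex set `int K - int K`. Since `K - K` and its interior are convex and
centrally symmetric, `K₀ - K₀ = K - K` and `int K₀ - int K₀ = int (K - K)`, so the translates of
`K₀` touch under the same condition.
-/

open scoped Pointwise

open Set

theorem vadd_inter_vadd_nonempty_iff {E : Type*} [AddCommGroup E] (A B : Set E) (x₁ x₂ : E) :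
    ((x₁ +ᵥ A) ∩ (x₂ +ᵥ B)).Nonempty ↔ x₂ - x₁ ∈ A - B := by
  constructor
  · rintro ⟨_, ⟨a, ha, rfl⟩, b, hb, hab⟩
    exact ⟨a, ha, b, hb, sub_eq_sub_iff_add_eq_add.mpr (by rw [add_comm]; exact hab.symm)⟩
  · rintro ⟨a, ha, b, hb, hab⟩
    exact ⟨x₁ + a, ⟨a, ha, rfl⟩, b, hb,
      by rw [add_comm]; exact (sub_eq_sub_iff_add_eq_add.mp hab).symm⟩

theorem Convex.smul_sub_smul_of_neg_eq {E : Type*} [AddCommGroup E] [Module ℝ E] {S : Set E}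
    (hS : Convex ℝ S) (hneg : -S = S) {a b : ℝ} (ha : 0 ≤ a) (hb : 0 ≤ b) (hab : a + b = 1) :
    a • S - b • S = S := by
  rw [sub_eq_add_neg, ← smul_set_neg, hneg, ← hS.add_smul ha hb, hab, one_smul]

section Topological

variable {E : Type*} [AddCommGroup E] [TopologicalSpace E] [IsTopologicalAddGroup E]

theorem Convex.interior_sub [Module ℝ E] [ContinuousSMul ℝ E] {A B : Set E}
    (hA : Convex ℝ A) (hB : Convex ℝ B) (hA' : (interior A).Nonempty)
    (hB' : (interior B).Nonempty) : interior (A - B) = interior A - interior B := by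
  refine subset_antisymm ?_ subset_interior_sub
  have hopen : IsOpen (interior A - interior B) := isOpen_interior.sub_right
  have hclosure : A - B ⊆ closure (interior A - interior B) := by
    rintro _ ⟨a, ha, b, hb, rfl⟩
    refine map_mem_closure₂ continuous_sub ?_ ?_ fun a ha b hb ↦ sub_mem_sub ha hb
    · exact hA.closure_interior_eq_closure_of_nonempty_interior hA' ▸ subset_closure ha
    · exact hB.closure_interior_eq_closure_of_nonempty_interior hB' ▸ subset_closure hb
  calc interior (A - B) ⊆ interior (closure (interior A - interior B)) := interior_mono hclosure
    _ = interior A - interior B := by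
      rw [(hA.interior.sub hB.interior).interior_closure_eq_interior_of_nonempty_interior
        (by rw [hopen.interior_eq]; exact hA'.sub hB'), hopen.interior_eq]

def Touches (A B : Set E) : Prop :=
  (A ∩ B).Nonempty ∧ Disjoint (interior A) (interior B)

theorem touches_vadd_vadd_iff (A B : Set E) (x₁ x₂ : E) :
    Touches (x₁ +ᵥ A) (x₂ +ᵥ B) ↔ x₂ - x₁ ∈ A - B ∧ x₂ - x₁ ∉ interior A - interior B := by
  rw [Touches, interior_vadd, interior_vadd, disjoint_iff_inter_eq_empty,
    ← not_nonempty_iff_eq_empty, vadd_inter_vadd_nonempty_iff, vadd_inter_vadd_nonempty_iff]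

end Topological

theorem translates_touch_iff_minkowskiSym_general {d : ℕ}
    (K : Set (EuclideanSpace ℝ (Fin d)))
    (hconv : Convex ℝ K) (hint : (interior K).Nonempty)
    (x₁ x₂ : EuclideanSpace ℝ (Fin d)) :
    (((x₁ +ᵥ K) ∩ (x₂ +ᵥ K)).Nonempty ∧
        Disjoint (interior (x₁ +ᵥ K)) (interior (x₂ +ᵥ K))) ↔
      (((x₁ +ᵥ (2⁻¹ : ℝ) • (K - K)) ∩ (x₂ +ᵥ (2⁻¹ : ℝ) • (K - K))).Nonempty ∧
        Disjoint (interior (x₁ +ᵥ (2⁻¹ : ℝ) • (K - K)))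
          (interior (x₂ +ᵥ (2⁻¹ : ℝ) • (K - K)))) := by
  have hhalf : (2⁻¹ : ℝ) + 2⁻¹ = 1 := by norm_num
  have hK₀ : (2⁻¹ : ℝ) • (K - K) - (2⁻¹ : ℝ) • (K - K) = K - K :=
    (hconv.sub hconv).smul_sub_smul_of_neg_eq (neg_sub K K) (by positivity) (by positivity) hhalf
  have hintK₀ : interior ((2⁻¹ : ℝ) • (K - K)) - interior ((2⁻¹ : ℝ) • (K - K)) =
      interior K - interior K := by
    rw [interior_smul₀ (by norm_num), hconv.interior_sub hconv hint hint]
    exact (hconv.interior.sub hconv.interior).smul_sub_smul_of_neg_eq (neg_sub _ _)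
      (by positivity) (by positivity) hhalf
  change Touches _ _ ↔ Touches _ _
  rw [touches_vadd_vadd_iff, touches_vadd_vadd_iff, hK₀, hintK₀]

/-- Minkowski's lemma (touching part): two translates of a convex body `K` touch
(intersect with disjoint interiors) iff the corresponding translates of the Minkowski
symmetrization `K₀ = (1/2)(K - K)` touch. -/
theorem translates_touch_iff_minkowskiSym {d : ℕ}
    (K : Set (EuclideanSpace ℝ (Fin d)))
    (hconv : Convex ℝ K) (hcomp : IsCompact K) (hint : (interior K).Nonempty)
    (x₁ x₂ : EuclideanSpace ℝ (Fin d)) :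
    (((x₁ +ᵥ K) ∩ (x₂ +ᵥ K)).Nonempty ∧
        Disjoint (interior (x₁ +ᵥ K)) (interior (x₂ +ᵥ K))) ↔
      (((x₁ +ᵥ (2⁻¹ : ℝ) • (K - K)) ∩ (x₂ +ᵥ (2⁻¹ : ℝ) • (K - K))).Nonempty ∧
        Disjoint (interior (x₁ +ᵥ (2⁻¹ : ℝ) • (K - K)))
          (interior (x₂ +ᵥ (2⁻¹ : ℝ) • (K - K)))) :=
  translates_touch_iff_minkowskiSym_general K hconv hint x₁ x₂
end

section
/- Let K be a convex body in ℝ^d, let {x_i + K} (i = 1,…,n) be a packing of translates of K (pairwise disjoint interiors), and suppose a hyperplane T separates x_p + K from x_q + K and is disjoint from the interior of every x_i + K. Then there is a hyperplane T₀ parallel to T that separates x_p + K₀ from x_q + K₀ and is disjoint from the interior of every x_i + K₀, where K₀ = (1/2)(K − K). -/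
/-!
Let `m` and `M` be the infimum and supremum of `f` on `K`. By linearity `f` takes values in
`[-(M - m)/2, (M - m)/2]` on `K₀ = ½(K - K)`, strictly inside on its interior, so passing from
`x + K` to `x + K₀` shifts the range `[f x + m, f x + M]` down by `(m + M)/2`. Since `f` takes
every value strictly between `m` and `M` on the convex set `interior K`, a hyperplane
`{f = a}` avoiding `interior (xᵢ + K)` has all of `xᵢ + K` on one side. Hence
`{f = a - (m + M)/2}` works for the translates of `K₀`.
-/

open Set
open scoped Pointwise

variable {E : Type*} [AddCommGroup E]

theorem forall_mem_vadd_map_le_iff {F : Type*} [FunLike F E ℝ] [AddMonoidHomClass F E ℝ]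
    (f : F) (x : E) (S : Set E) (b : ℝ) :
    (∀ z ∈ x +ᵥ S, f z ≤ b) ↔ b - f x ∈ upperBounds (f '' S) := by
  simp only [mem_upperBounds, forall_mem_image, mem_vadd_set, vadd_eq_add, forall_exists_index,
    and_imp, forall_apply_eq_imp_iff₂, map_add, le_sub_iff_add_le']

theorem forall_mem_vadd_le_map_iff {F : Type*} [FunLike F E ℝ] [AddMonoidHomClass F E ℝ]
    (f : F) (x : E) (S : Set E) (b : ℝ) :
    (∀ z ∈ x +ᵥ S, b ≤ f z) ↔ b - f x ∈ lowerBounds (f '' S) := by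
  simp only [mem_lowerBounds, forall_mem_image, mem_vadd_set, vadd_eq_add, forall_exists_index,
    and_imp, forall_apply_eq_imp_iff₂, map_add, sub_le_iff_le_add']

section HalfDifference

variable [Module ℝ E] {F : Type*} [FunLike F E ℝ] [LinearMapClass F ℝ E ℝ] {f : F} {K : Set E}
  {m M : ℝ}

theorem abs_map_le_of_mem_half_sub (hm : m ∈ lowerBounds (f '' K))
    (hM : M ∈ upperBounds (f '' K)) {z : E} (hz : z ∈ (2⁻¹ : ℝ) • (K - K)) :
    |f z| ≤ (M - m) / 2 := by
  obtain ⟨_, ⟨k₁, hk₁, k₂, hk₂, rfl⟩, rfl⟩ := hz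
  rw [map_smul, map_sub, smul_eq_mul, abs_le]
  constructor <;>
    linarith [hm ⟨k₁, hk₁, rfl⟩, hM ⟨k₁, hk₁, rfl⟩, hm ⟨k₂, hk₂, rfl⟩, hM ⟨k₂, hk₂, rfl⟩]

theorem forall_mem_vadd_half_sub_map_le (hm : m ∈ lowerBounds (f '' K))
    (hM : IsLUB (f '' K) M) {x : E} {b : ℝ} (h : ∀ z ∈ x +ᵥ K, f z ≤ b) :
    ∀ z ∈ x +ᵥ (2⁻¹ : ℝ) • (K - K), f z ≤ b - (m + M) / 2 := by
  have hMb : M ≤ b - f x := (isLUB_le_iff hM).2 ((forall_mem_vadd_map_le_iff f x K b).1 h)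
  refine (forall_mem_vadd_map_le_iff f x _ _).2 ?_
  rintro _ ⟨y, hy, rfl⟩
  linarith [(abs_le.1 (abs_map_le_of_mem_half_sub hm hM.1 hy)).2]

theorem forall_mem_vadd_half_sub_le_map (hm : IsGLB (f '' K) m)
    (hM : M ∈ upperBounds (f '' K)) {x : E} {b : ℝ} (h : ∀ z ∈ x +ᵥ K, b ≤ f z) :
    ∀ z ∈ x +ᵥ (2⁻¹ : ℝ) • (K - K), b - (m + M) / 2 ≤ f z := by
  have hmb : b - f x ≤ m := (le_isGLB_iff hm).2 ((forall_mem_vadd_le_map_iff f x K b).1 h)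
  refine (forall_mem_vadd_le_map_iff f x _ _).2 ?_
  rintro _ ⟨y, hy, rfl⟩
  linarith [(abs_le.1 (abs_map_le_of_mem_half_sub hm.1 hM hy)).1]

end HalfDifference

variable [Module ℝ E] [TopologicalSpace E] [IsTopologicalAddGroup E] [ContinuousSMul ℝ E]

theorem ContinuousLinearMap.abs_lt_of_mem_interior {f : E →L[ℝ] ℝ} (hf : f ≠ 0) {S : Set E}
    {b : ℝ} (hS : ∀ z ∈ S, |f z| ≤ b) {z : E} (hz : z ∈ interior S) : |f z| < b := by
  have hSb : f '' S ⊆ Icc (-b) b := by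
    rintro _ ⟨y, hy, rfl⟩
    exact abs_le.1 (hS y hy)
  have hzb : f z ∈ interior (Icc (-b) b) :=
    interior_mono hSb <| (f.isOpenMap_of_ne_zero hf).image_interior_subset S ⟨z, hz, rfl⟩
  rw [interior_Icc] at hzb
  exact abs_lt.2 hzb

theorem ContinuousLinearMap.map_ne_of_mem_interior_vadd_half_sub {f : E →L[ℝ] ℝ} (hf : f ≠ 0)
    {K : Set E} {m M : ℝ} (hm : IsGLB (f '' K) m) (hM : IsLUB (f '' K) M) {x : E} {b : ℝ}
    (h : (∀ z ∈ x +ᵥ K, f z ≤ b) ∨ ∀ z ∈ x +ᵥ K, b ≤ f z) :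
    ∀ z ∈ interior (x +ᵥ (2⁻¹ : ℝ) • (K - K)), f z ≠ b - (m + M) / 2 := by
  rw [interior_vadd]
  rintro _ ⟨y, hy, rfl⟩
  have hy' := abs_lt.1 <|
    f.abs_lt_of_mem_interior hf (fun z hz => abs_map_le_of_mem_half_sub hm.1 hM.1 hz) hy
  simp only [vadd_eq_add, map_add]
  rcases h with h | h
  · have := (isLUB_le_iff hM).2 ((forall_mem_vadd_map_le_iff f x K b).1 h)
    intro
    linarith
  · have := (le_isGLB_iff hm).2 ((forall_mem_vadd_le_map_iff f x K b).1 h)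
    intro
    linarith

theorem Convex.forall_map_le_or_forall_le_map {K : Set E} (hK : Convex ℝ K)
    (hint : (interior K).Nonempty) (f : E →L[ℝ] ℝ) {t : ℝ} (ht : ∀ z ∈ interior K, f z ≠ t) :
    (∀ k ∈ K, f k ≤ t) ∨ ∀ k ∈ K, t ≤ f k := by
  by_contra! ⟨⟨k₂, hk₂, h₂⟩, ⟨k₁, hk₁, h₁⟩⟩
  obtain ⟨w, hw⟩ := hint
  have hseg : ∀ k ∈ K, t ∉ openSegment ℝ (f k) (f w) := fun k hk htk => by
    obtain ⟨z, hz, hzt⟩ : t ∈ f '' openSegment ℝ k w := by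
      rw [← ContinuousLinearMap.coe_coe f, ← LinearMap.coe_toAffineMap, image_openSegment]
      simpa using htk
    exact ht z (hK.openSegment_self_interior_subset_interior hk hw hz) hzt
  rcases lt_trichotomy (f w) t with h | h | h
  · exact hseg k₂ hk₂ (by rw [openSegment_symm, openSegment_eq_Ioo (h.trans h₂)]; exact ⟨h, h₂⟩)
  · exact ht w hw h
  · exact hseg k₁ hk₁ (by rw [openSegment_eq_Ioo (h₁.trans h)]; exact ⟨h₁, h⟩)

theorem minkowskiSym_separating_hyperplane_general {d n : ℕ}
    (K : Set (EuclideanSpace ℝ (Fin d)))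
    (hconv : Convex ℝ K) (hint : (interior K).Nonempty)
    (x : Fin n → EuclideanSpace ℝ (Fin d))
    (p q : Fin n)
    (f : EuclideanSpace ℝ (Fin d) →L[ℝ] ℝ) (hf : f ≠ 0) (a : ℝ)
    (hsep₁ : ∀ z ∈ x p +ᵥ K, f z ≤ a)
    (hsep₂ : ∀ z ∈ x q +ᵥ K, a ≤ f z)
    (havoid : ∀ i, ∀ z ∈ interior (x i +ᵥ K), f z ≠ a) :
    ∃ a₀ : ℝ,
      (∀ z ∈ x p +ᵥ (2⁻¹ : ℝ) • (K - K), f z ≤ a₀) ∧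
      (∀ z ∈ x q +ᵥ (2⁻¹ : ℝ) • (K - K), a₀ ≤ f z) ∧
      (∀ i, ∀ z ∈ interior (x i +ᵥ (2⁻¹ : ℝ) • (K - K)), f z ≠ a₀) := by
  have hne : (f '' K).Nonempty := (hint.mono interior_subset).image f
  obtain ⟨M, hM⟩ := Real.exists_isLUB hne ⟨_, (forall_mem_vadd_map_le_iff f _ K a).1 hsep₁⟩
  obtain ⟨m, hm⟩ := Real.exists_isGLB hne ⟨_, (forall_mem_vadd_le_map_iff f _ K a).1 hsep₂⟩
  have hside : ∀ i, (∀ z ∈ x i +ᵥ K, f z ≤ a) ∨ ∀ z ∈ x i +ᵥ K, a ≤ f z := fun i =>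
    (hconv.vadd (x i)).forall_map_le_or_forall_le_map
      (by rw [interior_vadd]; exact hint.vadd_set) f (havoid i)
  exact ⟨a - (m + M) / 2, forall_mem_vadd_half_sub_map_le hm.1 hM hsep₁,
    forall_mem_vadd_half_sub_le_map hm hM.1 hsep₂,
    fun i => f.map_ne_of_mem_interior_vadd_half_sub hf hm hM (hside i)⟩

/-- Separating-hyperplane part of Minkowski's lemma for totally separable packings:
if a hyperplane `{f = a}` separates `x_p + K` from `x_q + K` and avoids the interiors of
all members of a packing of translates of `K`, then some parallel hyperplane `{f = a₀}`
separates `x_p + K₀` from `x_q + K₀` and avoids the interiors of all translates of the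
Minkowski symmetrization `K₀ = (1/2)(K - K)`. -/
theorem minkowskiSym_separating_hyperplane {d n : ℕ}
    (K : Set (EuclideanSpace ℝ (Fin d)))
    (hconv : Convex ℝ K) (hcomp : IsCompact K) (hint : (interior K).Nonempty)
    (x : Fin n → EuclideanSpace ℝ (Fin d))
    (hpack : ∀ i j, i ≠ j → Disjoint (interior (x i +ᵥ K)) (interior (x j +ᵥ K)))
    (p q : Fin n)
    (f : EuclideanSpace ℝ (Fin d) →L[ℝ] ℝ) (hf : f ≠ 0) (a : ℝ)
    (hsep₁ : ∀ z ∈ x p +ᵥ K, f z ≤ a)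
    (hsep₂ : ∀ z ∈ x q +ᵥ K, a ≤ f z)
    (havoid : ∀ i, ∀ z ∈ interior (x i +ᵥ K), f z ≠ a) :
    ∃ a₀ : ℝ,
      (∀ z ∈ x p +ᵥ (2⁻¹ : ℝ) • (K - K), f z ≤ a₀) ∧
      (∀ z ∈ x q +ᵥ (2⁻¹ : ℝ) • (K - K), a₀ ≤ f z) ∧
      (∀ i, ∀ z ∈ interior (x i +ᵥ (2⁻¹ : ℝ) • (K - K)), f z ≠ a₀) :=
  minkowskiSym_separating_hyperplane_general K hconv hint x p q f hf a hsep₁ hsep₂ havoid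
end

section
/- Let K₀ be a smooth o-symmetric convex domain in ℝ². If S ⊆ ∂K₀ is a separable point set with |S| ≥ 3, then the origin lies in the convex hull of S. -/
/-!
The supporting functional `F y` of a point `y ∈ S` is positive at `y`, because the origin is
interior to `K`, and nonpositive on the other points of `S`, by separability; hence no point of
`S` lies in the cone spanned by the others. Three vectors of the plane satisfy a nontrivial linear
relation, and after a change of sign at most one of its coefficients is negative. If none is, the
origin is a convex combination of the three vectors; otherwise the vector with the negative
coefficient lies in the cone spanned by the other two.
-/

open scoped Pointwise

theorem fin_three_subsingleton_neg_or_subsingleton_pos {α : Type*} [Preorder α] [Zero α]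
    (g : Fin 3 → α) :
    {i | g i < 0}.Subsingleton ∨ {i | 0 < g i}.Subsingleton := by
  by_contra! h
  obtain ⟨⟨i, hi, j, hj, hij⟩, ⟨k, hk, l, hl, hkl⟩⟩ := h
  have hik : i ≠ k := by rintro rfl; exact lt_asymm hi hk
  have hil : i ≠ l := by rintro rfl; exact lt_asymm hi hl
  have hjk : j ≠ k := by rintro rfl; exact lt_asymm hj hk
  have hjl : j ≠ l := by rintro rfl; exact lt_asymm hj hl
  omega

section ConicalDependence

open Set Finset

variable {𝕜 V ι : Type*} [Field 𝕜] [LinearOrder 𝕜] [IsStrictOrderedRing 𝕜]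
  [AddCommGroup V] [Module 𝕜 V] [Fintype ι]

theorem zero_mem_convexHull_of_sum_smul_eq_zero {v : ι → V} {g : ι → 𝕜}
    (hsum : ∑ i, g i • v i = 0) (hg : ∀ i, 0 ≤ g i) (hne : ∃ i, g i ≠ 0) :
    (0 : V) ∈ convexHull 𝕜 (range v) := by
  obtain ⟨i, hi⟩ := hne
  have hpos : 0 < ∑ j, g j :=
    sum_pos' (fun j _ ↦ hg j) ⟨i, mem_univ i, (hg i).lt_of_ne' hi⟩
  have hcm : univ.centerMass g v = 0 := by simp [centerMass, hsum]
  rw [← hcm]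
  exact univ.centerMass_mem_convexHull (fun j _ ↦ hg j) hpos fun j _ ↦ mem_range_self j

theorem mem_hull_image_compl_of_sum_smul_eq_zero [DecidableEq ι] {v : ι → V} {g : ι → 𝕜}
    (hsum : ∑ j, g j • v j = 0) {i : ι} (hi : g i < 0) (hg : ∀ j ≠ i, 0 ≤ g j) :
    v i ∈ PointedCone.hull 𝕜 (v '' {i}ᶜ) := by
  have hvi : g i • v i = -∑ j ∈ univ.erase i, g j • v j :=
    eq_neg_of_add_eq_zero_left <| by
      rw [add_sum_erase _ (fun j ↦ g j • v j) (mem_univ i), hsum]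
  have hcomb : v i = ∑ j ∈ univ.erase i, (-(g i)⁻¹ * g j) • v j := by
    rw [← inv_smul_smul₀ hi.ne (v i), hvi, smul_neg, smul_sum, ← sum_neg_distrib]
    simp only [smul_smul, neg_mul, neg_smul]
  rw [hcomb]
  refine Submodule.sum_mem _ fun j hj ↦ ?_
  have hji : j ≠ i := ne_of_mem_erase hj
  exact PointedCone.smul_mem _ (mul_nonneg (neg_nonneg.2 (inv_nonpos.2 hi.le)) (hg j hji))
    (PointedCone.subset_hull ⟨j, hji, rfl⟩)

theorem zero_mem_convexHull_or_mem_hull_of_sum_smul_eq_zero {v : ι → V} {g : ι → 𝕜}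
    (hsum : ∑ i, g i • v i = 0) (hne : ∃ i, g i ≠ 0) (hneg : {i | g i < 0}.Subsingleton) :
    (0 : V) ∈ convexHull 𝕜 (range v) ∨ ∃ i, v i ∈ PointedCone.hull 𝕜 (v '' {i}ᶜ) := by
  classical
  by_cases h : ∃ i, g i < 0
  · obtain ⟨i, hi⟩ := h
    exact .inr ⟨i, mem_hull_image_compl_of_sum_smul_eq_zero hsum hi
      fun j hj ↦ not_lt.1 fun hj' ↦ hj (hneg hj' hi)⟩
  · push Not at h
    exact .inl (zero_mem_convexHull_of_sum_smul_eq_zero hsum h hne)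

theorem zero_mem_convexHull_or_mem_hull_of_not_linearIndependent {v : Fin 3 → V}
    (hv : ¬ LinearIndependent 𝕜 v) :
    (0 : V) ∈ convexHull 𝕜 (range v) ∨ ∃ i, v i ∈ PointedCone.hull 𝕜 (v '' {i}ᶜ) := by
  obtain ⟨g, hsum, i, hi⟩ := Fintype.not_linearIndependent_iff.1 hv
  rcases fin_three_subsingleton_neg_or_subsingleton_pos g with hneg | hpos
  · exact zero_mem_convexHull_or_mem_hull_of_sum_smul_eq_zero hsum ⟨i, hi⟩ hneg
  · refine zero_mem_convexHull_or_mem_hull_of_sum_smul_eq_zero (g := -g) ?_ ⟨i, by simpa⟩ ?_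
    · simp [neg_smul, hsum]
    · simpa [neg_lt_zero] using hpos

theorem apply_nonpos_of_mem_hull (f : V →ₗ[𝕜] 𝕜) {s : Set V} (hs : ∀ x ∈ s, f x ≤ 0) {x : V}
    (hx : x ∈ PointedCone.hull 𝕜 s) : f x ≤ 0 := by
  induction hx using Submodule.span_induction with
  | mem y hy => exact hs y hy
  | zero => simp
  | add y z _ _ hy hz => simpa using add_nonpos hy hz
  | smul c y _ hy =>
    change f ((c : 𝕜) • y) ≤ 0
    rw [map_smul, smul_eq_mul]
    exact mul_nonpos_of_nonneg_of_nonpos c.2 hy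

end ConicalDependence

section ConvexBody

open Set

variable {E : Type*} [AddCommGroup E] [TopologicalSpace E] [Module ℝ E] [ContinuousSMul ℝ E]
  {K : Set E}

theorem Convex.zero_mem_interior_of_eq_neg [IsTopologicalAddGroup E] (hconv : Convex ℝ K)
    (hsymm : K = -K) (hint : (interior K).Nonempty) : (0 : E) ∈ interior K := by
  obtain ⟨x, hx⟩ := hint
  have hnegx : -x ∈ interior K := by
    obtain ⟨t, htK, ht, hxt⟩ := mem_interior.1 hx
    refine mem_interior.2 ⟨-t, ?_, ht.neg, by simpa using hxt⟩
    rw [hsymm]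
    exact neg_subset_neg.2 htK
  simpa using hconv.interior hx hnegx (by norm_num : (0 : ℝ) ≤ 1 / 2)
    (by norm_num : (0 : ℝ) ≤ 1 / 2) (by norm_num)

theorem pos_of_forall_apply_le_of_zero_mem_interior (h0 : (0 : E) ∈ interior K)
    {f : E →ₗ[ℝ] ℝ} (hf : f ≠ 0) {p : E} (hp : ∀ x ∈ K, f x ≤ f p) : 0 < f p := by
  obtain ⟨x, hx⟩ : ∃ x, 0 < f x := by
    obtain ⟨x, hx⟩ := DFunLike.ne_iff.1 hf
    rcases hx.lt_or_gt with hneg | hpos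
    · exact ⟨-x, by simpa using hneg⟩
    · exact ⟨x, hpos⟩
  have hlim : Filter.Tendsto (fun t : ℝ ↦ t • x) (nhdsWithin 0 (Ioi 0)) (nhds 0) :=
    tendsto_nhdsWithin_of_tendsto_nhds
      ((continuous_id.smul continuous_const).tendsto' 0 0 (zero_smul ℝ x))
  obtain ⟨t, htK, ht⟩ := ((hlim.eventually (mem_interior_iff_mem_nhds.1 h0)).and
    self_mem_nhdsWithin).exists
  calc 0 < t * f x := mul_pos ht hx
    _ = f (t • x) := by rw [map_smul, smul_eq_mul]
    _ ≤ f p := hp _ htK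

end ConvexBody

/-- `F p` is a unit-norm supporting functional of `K` at `p`; the cap `C(p)` of the paper is
`{x ∈ frontier K | 0 < F p x ∧ F p x ≤ F p p}`. -/
theorem origin_mem_convexHull_of_separable_point_set_general
    (K : Set (EuclideanSpace ℝ (Fin 2)))
    (hconv : Convex ℝ K) (hcomp : IsCompact K) (hint : (interior K).Nonempty)
    (hsymm : K = -K)
    (F : EuclideanSpace ℝ (Fin 2) → (EuclideanSpace ℝ (Fin 2) →L[ℝ] ℝ))
    (hFnorm : ∀ p ∈ frontier K, ‖F p‖ = 1)
    (hFsupp : ∀ p ∈ frontier K, ∀ x ∈ K, F p x ≤ F p p)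
    (S : Set (EuclideanSpace ℝ (Fin 2))) (hS : S ⊆ frontier K)
    (hsep : ∀ x ∈ S, ∀ y ∈ S, x ≠ y →
      ¬ (x ∈ frontier K ∧ 0 < F y x ∧ F y x ≤ F y y))
    (h3 : ∃ a b c, a ∈ S ∧ b ∈ S ∧ c ∈ S ∧ a ≠ b ∧ a ≠ c ∧ b ≠ c) :
    (0 : EuclideanSpace ℝ (Fin 2)) ∈ convexHull ℝ S := by
  obtain ⟨a, b, c, ha, hb, hc, hab, hac, hbc⟩ := h3
  have h0 := hconv.zero_mem_interior_of_eq_neg hsymm hint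
  have hFK : ∀ y ∈ S, ∀ x ∈ K, F y x ≤ F y y := fun y hy ↦ hFsupp y (hS hy)
  have hcone : ∀ y ∈ S, y ∉ PointedCone.hull ℝ (S \ {y}) := by
    intro y hy hmem
    have hFy : F y ≠ 0 := fun h ↦ by simpa [h] using hFnorm y (hS hy)
    have hpos : 0 < F y y := pos_of_forall_apply_le_of_zero_mem_interior h0
      (by simpa using ContinuousLinearMap.coe_injective.ne hFy) (hFK y hy)
    refine hpos.not_ge (apply_nonpos_of_mem_hull (F y : _ →ₗ[ℝ] ℝ) ?_ hmem)
    rintro x ⟨hx, hxy⟩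
    exact not_lt.1 fun hlt ↦ hsep x hx y hy hxy
      ⟨hS hx, hlt, hFK y hy x (hcomp.isClosed.frontier_subset (hS hx))⟩
  let v : Fin 3 → EuclideanSpace ℝ (Fin 2) := ![a, b, c]
  have hv : ¬ LinearIndependent ℝ v := fun hli ↦ by
    simpa using hli.fintype_card_le_finrank
  have hvS : Set.range v ⊆ S := by
    rintro _ ⟨i, rfl⟩; fin_cases i <;> assumption
  rcases zero_mem_convexHull_or_mem_hull_of_not_linearIndependent hv with h | ⟨i, hi⟩
  · exact convexHull_mono hvS h
  · refine absurd (Submodule.span_mono ?_ hi) (hcone (v i) (hvS (Set.mem_range_self i)))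
    rintro _ ⟨j, hji, rfl⟩
    refine ⟨hvS (Set.mem_range_self j), ?_⟩
    fin_cases i <;> fin_cases j <;>
      simp [v, hab, hac, hbc, hab.symm, hac.symm, hbc.symm] at hji ⊢

/-- For a smooth o-symmetric convex domain `K` in `ℝ²` (smoothness encoded by the map `F`
assigning to each boundary point its unique unit-norm supporting functional), any
separable point set `S ⊆ ∂K` with at least three points contains the origin in its convex
hull. The cap `C(p)` is `{x ∈ ∂K | 0 < F p x ∧ F p x ≤ F p p}`. -/
theorem origin_mem_convexHull_of_separable_point_set
    (K : Set (EuclideanSpace ℝ (Fin 2)))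
    (hconv : Convex ℝ K) (hcomp : IsCompact K) (hint : (interior K).Nonempty)
    (hsymm : K = -K)
    (F : EuclideanSpace ℝ (Fin 2) → (EuclideanSpace ℝ (Fin 2) →L[ℝ] ℝ))
    (hFnorm : ∀ p ∈ frontier K, ‖F p‖ = 1)
    (hFsupp : ∀ p ∈ frontier K, ∀ x ∈ K, F p x ≤ F p p)
    (hsmooth : ∀ p ∈ frontier K, ∀ g : EuclideanSpace ℝ (Fin 2) →L[ℝ] ℝ,
      ‖g‖ = 1 → (∀ x ∈ K, g x ≤ g p) → g = F p)
    (S : Set (EuclideanSpace ℝ (Fin 2))) (hS : S ⊆ frontier K)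
    (hsep : ∀ x ∈ S, ∀ y ∈ S, x ≠ y →
      ¬ (x ∈ frontier K ∧ 0 < F y x ∧ F y x ≤ F y y))
    (h3 : ∃ a b c, a ∈ S ∧ b ∈ S ∧ c ∈ S ∧ a ≠ b ∧ a ≠ c ∧ b ≠ c) :
    (0 : EuclideanSpace ℝ (Fin 2)) ∈ convexHull ℝ S :=
  origin_mem_convexHull_of_separable_point_set_general K hconv hcomp hint hsymm F hFnorm hFsupp S hS
    hsep h3
end

section
/- Let K₀ be a smooth o-symmetric convex domain in ℝ². A separable point set S ⊆ ∂K₀ has cardinality 4 if and only if S = {p, −p, q, −q} where {p, q} is an Auerbach basis of the normed plane with unit ball K₀. -/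
/-!
Write `F x` for the supporting functional at `x ∈ ∂K`; separability of `S` says `F x y ≤ 0` for
distinct `x, y ∈ S`. Two distinct points of `S` on a line through the origin must be antipodal,
since `F x` is positive at `x` and `K` is symmetric. Among four points of `S`, three satisfy a
linear relation in the plane; whatever the signs of its coefficients, either one point is a
nonnegative combination of two others (contradicting `F` at that point) or the three positively
span the origin, forcing the functional of the fourth point to vanish on two independent vectors.
So `S` contains an antipodal pair `±p`; both functionals `±F p` are nonpositive on the remaining
two points, which therefore lie on `ker F p` and form a second antipodal pair `±q`. Finally
`F p q = 0` gives Birkhoff orthogonality of `p` to `q`, since `F p` is maximal on `K` at `p`.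
-/

open scoped Pointwise
open Topology Module

section Gauge

variable {E : Type*} [AddCommGroup E] [Module ℝ E] {K : Set E} {f : E →ₗ[ℝ] ℝ}

theorem pos_of_forall_apply_le (hK : Absorbent ℝ K) (hf : f ≠ 0) {p : E}
    (hsupp : ∀ x ∈ K, f x ≤ f p) : 0 < f p := by
  obtain ⟨x, hx⟩ : ∃ x, 0 < f x := by
    obtain ⟨x, hx⟩ := DFunLike.ne_iff.1 hf
    rcases (show f x ≠ 0 from hx).lt_or_gt with h | h
    · exact ⟨-x, by simpa using h⟩
    · exact ⟨x, h⟩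
  obtain ⟨r, hr, w, hw, rfl⟩ := hK.gauge_set_nonempty (x := x)
  rw [map_smul, smul_eq_mul] at hx
  exact (pos_of_mul_pos_right hx hr.le).trans_le (hsupp w hw)

theorem gauge_le_gauge_add_smul_of_apply_eq_zero (hK : Absorbent ℝ K) {p q : E}
    (hp : 0 < f p) (hsupp : ∀ x ∈ K, f x ≤ f p) (hgp : gauge K p ≤ 1) (hq : f q = 0) (t : ℝ) :
    gauge K p ≤ gauge K (p + t • q) := by
  refine hgp.trans (not_lt.1 fun hlt => ?_)
  obtain ⟨b, hb0, hb1, w, hw, hbw⟩ := exists_lt_of_gauge_lt hK hlt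
  have hfw : b * f w = f p := by
    simp only at hbw
    rw [← smul_eq_mul, ← map_smul, hbw, map_add, map_smul, hq, smul_zero, add_zero]
  nlinarith [hsupp w hw]

theorem eq_neg_of_not_linearIndependent (hsymm : ∀ x ∈ K, -x ∈ K) {x y : E}
    (hx : gauge K x = 1) (hy : gauge K y = 1) (hfx : 0 < f x) (hfy : f y ≤ 0)
    (h : ¬ LinearIndependent ℝ ![x, y]) : y = -x := by
  have hx0 : x ≠ 0 := by rintro rfl; simp at hfx
  obtain ⟨a, rfl⟩ := not_forall_not.1 (mt (LinearIndependent.pair_iff' hx0).2 h)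
  rw [map_smul, smul_eq_mul] at hfy
  have ha : a ≤ 0 := nonpos_of_mul_nonpos_left hfy hfx
  rw [← neg_neg a, neg_smul, ← smul_neg, gauge_smul_of_nonneg (neg_nonneg.2 ha),
    gauge_neg hsymm, hx, smul_eq_mul, mul_one] at hy
  rw [← neg_neg a, hy, neg_smul, one_smul]

end Gauge

section Symmetric

variable {G : Type*} [TopologicalSpace G] [InvolutiveNeg G] [ContinuousNeg G] {K : Set G}

theorem neg_mem_interior_of_eq_neg (hsymm : K = -K) {x : G} (hx : x ∈ interior K) :
    -x ∈ interior K := by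
  have key : interior (-K) = -interior K := ((Homeomorph.neg G).preimage_interior K).symm
  rwa [hsymm, key, Set.neg_mem_neg]

theorem neg_mem_frontier_of_eq_neg (hsymm : K = -K) {x : G} (hx : x ∈ frontier K) :
    -x ∈ frontier K := by
  have key : frontier (-K) = -frontier K := ((Homeomorph.neg G).preimage_frontier K).symm
  rwa [hsymm, key, Set.neg_mem_neg]

end Symmetric

theorem Convex.mem_nhds_zero_of_eq_neg {E : Type*} [AddCommGroup E] [Module ℝ E]
    [TopologicalSpace E] [IsTopologicalAddGroup E] [ContinuousConstSMul ℝ E] {K : Set E}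
    (hconv : Convex ℝ K) (hsymm : K = -K) (hint : (interior K).Nonempty) : K ∈ 𝓝 0 := by
  obtain ⟨z, hz⟩ := hint
  have h0 := hconv.interior hz (neg_mem_interior_of_eq_neg hsymm hz) (a := 1 / 2) (b := 1 / 2)
    (by norm_num) (by norm_num) (by norm_num)
  rw [smul_neg, add_neg_cancel] at h0
  exact mem_interior_iff_mem_nhds.1 h0

theorem eq_neg_of_unique_support {E : Type*} [SeminormedAddCommGroup E] [NormedSpace ℝ E]
    {K : Set E} (hsymm : K = -K) {f g : E →L[ℝ] ℝ} {p : E} (hf : ‖f‖ = 1)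
    (hsupp : ∀ x ∈ K, f x ≤ f p)
    (huniq : ∀ h : E →L[ℝ] ℝ, ‖h‖ = 1 → (∀ x ∈ K, h x ≤ h (-p)) → h = g) : g = -f :=
  (huniq (-f) (by rw [norm_neg, hf]) fun x hx => by
    simpa using hsupp (-x) (by rwa [hsymm, Set.neg_mem_neg])).symm

theorem ncard_eq_four_of_linearIndependent {E : Type*} [AddCommGroup E] [Module ℝ E] {p q : E}
    (h : LinearIndependent ℝ ![p, q]) : ({p, -p, q, -q} : Set E).ncard = 4 := by
  have key := LinearIndependent.pair_iff.1 h
  refine Set.ncard_eq_four.2 ⟨p, -p, q, -q, fun e => ?_, fun e => ?_, fun e => ?_, fun e => ?_,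
    fun e => ?_, fun e => ?_, rfl⟩
  · simpa using key 2 0 (by linear_combination (norm := module) e)
  · simpa using key 1 (-1) (by linear_combination (norm := module) e)
  · simpa using key 1 1 (by linear_combination (norm := module) e)
  · simpa using key 1 1 (by linear_combination (norm := module) -e)
  · simpa using key 1 (-1) (by linear_combination (norm := module) -e)
  · simpa using key 0 2 (by linear_combination (norm := module) e)

section PlanarRelations

variable {E : Type*} [AddCommGroup E] [Module ℝ E] [FiniteDimensional ℝ E]

theorem exists_smul_add_smul_add_smul_eq_zero (hE : finrank ℝ E ≤ 2) (a b c : E) :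
    ∃ α β γ : ℝ, (α ≠ 0 ∨ β ≠ 0 ∨ γ ≠ 0) ∧ α • a + β • b + γ • c = 0 := by
  have hdep : ¬ LinearIndependent ℝ ![a, b, c] := fun h => by
    simpa using h.fintype_card_le_finrank.trans hE
  obtain ⟨g, hg, i, hi⟩ := Fintype.not_linearIndependent_iff.1 hdep
  refine ⟨g 0, g 1, g 2, ?_, by simpa [Fin.sum_univ_three, add_assoc] using hg⟩
  fin_cases i <;> simp_all

theorem not_linearIndependent_of_apply_eq_zero (hE : finrank ℝ E ≤ 2) (f : E →ₗ[ℝ] ℝ)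
    {a b c : E} (ha : f a ≠ 0) (hb : f b = 0) (hc : f c = 0) :
    ¬ LinearIndependent ℝ ![b, c] := by
  obtain ⟨α, β, γ, hne, h⟩ := exists_smul_add_smul_add_smul_eq_zero hE a b c
  obtain rfl : α = 0 := by simpa [hb, hc, ha] using congrArg f h
  intro hind
  have := LinearIndependent.pair_iff.1 hind β γ (by simpa using h)
  tauto

end PlanarRelations

section Separated

variable {E : Type*} [AddCommGroup E] [Module ℝ E]

def IsSeparatedBy (F : E → E →ₗ[ℝ] ℝ) (S : Set E) : Prop :=
  (∀ x ∈ S, 0 < F x x) ∧ ∀ x ∈ S, ∀ y ∈ S, x ≠ y → F x y ≤ 0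

namespace IsSeparatedBy

variable {F : E → E →ₗ[ℝ] ℝ} {S : Set E}

theorem smul_add_smul_ne_smul (hS : IsSeparatedBy F S) {x y z : E} (hx : x ∈ S) (hy : y ∈ S)
    (hz : z ∈ S) (hxy : x ≠ y) (hxz : x ≠ z) {α β γ : ℝ} (hα : 0 ≤ α) (hβ : 0 ≤ β)
    (hγ : 0 < γ) : α • y + β • z ≠ γ • x := fun h => by
  have := congrArg (F x) h
  simp only [map_add, map_smul, smul_eq_mul] at this
  nlinarith [hS.1 x hx, hS.2 x hx y hy hxy, hS.2 x hx z hz hxz]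

theorem apply_eq_zero_of_smul_add_smul_add_smul_eq_zero (hS : IsSeparatedBy F S) {a b c d : E}
    (ha : a ∈ S) (hb : b ∈ S) (hc : c ∈ S) (hd : d ∈ S) (hab : a ≠ b) (hac : a ≠ c)
    (had : a ≠ d) {α β γ : ℝ} (hα : 0 < α) (hβ : 0 < β) (hγ : 0 < γ)
    (h : α • b + β • c + γ • d = 0) : F a b = 0 ∧ F a c = 0 := by
  have := congrArg (F a) h
  simp only [map_add, map_smul, smul_eq_mul, map_zero] at this
  have hb := hS.2 a ha b hb hab
  have hc := hS.2 a ha c hc hac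
  have hd := hS.2 a ha d hd had
  constructor <;> nlinarith [mul_nonpos_of_nonneg_of_nonpos hα.le hb,
    mul_nonpos_of_nonneg_of_nonpos hβ.le hc, mul_nonpos_of_nonneg_of_nonpos hγ.le hd]

theorem apply_eq_zero_of_neg_mem (hS : IsSeparatedBy F S) {p u : E} (hneg : F (-p) = -F p)
    (hp : p ∈ S) (hp' : -p ∈ S) (hu : u ∈ S) (hup : u ≠ p) (hup' : u ≠ -p) : F p u = 0 := by
  have h := hS.2 (-p) hp' u hu (Ne.symm hup')
  rw [hneg, LinearMap.neg_apply] at h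
  linarith [hS.2 p hp u hu (Ne.symm hup)]

theorem exists_not_linearIndependent [FiniteDimensional ℝ E] (hE : finrank ℝ E ≤ 2)
    (hS : IsSeparatedBy F S) {a b c d : E} (ha : a ∈ S) (hb : b ∈ S) (hc : c ∈ S) (hd : d ∈ S)
    (hab : a ≠ b) (hac : a ≠ c) (had : a ≠ d) (hbc : b ≠ c) (hbd : b ≠ d) (hcd : c ≠ d) :
    ∃ x ∈ S, ∃ y ∈ S, x ≠ y ∧ ¬ LinearIndependent ℝ ![x, y] := by
  by_contra! hind
  obtain ⟨α, β, γ, hne, h⟩ := exists_smul_add_smul_add_smul_eq_zero hE b c d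
  have hα0 : α ≠ 0 := by
    rintro rfl
    have := LinearIndependent.pair_iff.1 (hind c hc d hd hcd) β γ (by simpa [add_assoc] using h)
    tauto
  have hβ0 : β ≠ 0 := by
    rintro rfl
    have := LinearIndependent.pair_iff.1 (hind b hb d hd hbd) α γ (by simpa using h)
    tauto
  have hγ0 : γ ≠ 0 := by
    rintro rfl
    have := LinearIndependent.pair_iff.1 (hind b hb c hc hbc) α β (by simpa using h)
    tauto
  clear hne
  wlog hα : 0 < α generalizing α β γ
  · exact this (-α) (-β) (-γ) (by linear_combination (norm := module) -h) (neg_ne_zero.2 hα0)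
      (neg_ne_zero.2 hβ0) (neg_ne_zero.2 hγ0) (neg_pos.2 ((not_lt.1 hα).lt_of_ne hα0))
  rcases hβ0.lt_or_gt with hβ | hβ <;> rcases hγ0.lt_or_gt with hγ | hγ
  · exact hS.smul_add_smul_ne_smul hb hc hd hbc hbd (neg_nonneg.2 hβ.le) (neg_nonneg.2 hγ.le) hα
      (by linear_combination (norm := module) -h)
  · exact hS.smul_add_smul_ne_smul hc hb hd hbc.symm hcd hα.le hγ.le (neg_pos.2 hβ)
      (by linear_combination (norm := module) h)
  · exact hS.smul_add_smul_ne_smul hd hb hc hbd.symm hcd.symm hα.le hβ.le (neg_pos.2 hγ)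
      (by linear_combination (norm := module) h)
  · obtain ⟨hfb, hfc⟩ :=
      hS.apply_eq_zero_of_smul_add_smul_add_smul_eq_zero ha hb hc hd hab hac had hα hβ hγ h
    exact not_linearIndependent_of_apply_eq_zero hE (F a) (hS.1 a ha).ne' hfb hfc
      (hind b hb c hc hbc)

theorem exists_eq_antipodal_pairs_of_ncard_eq_four [FiniteDimensional ℝ E]
    (hE : finrank ℝ E ≤ 2) (hS : IsSeparatedBy F S) (hneg : ∀ x ∈ S, F (-x) = -F x)
    (hanti : ∀ x ∈ S, ∀ y ∈ S, x ≠ y → ¬ LinearIndependent ℝ ![x, y] → y = -x)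
    (hcard : S.ncard = 4) :
    ∃ p q, S = {p, -p, q, -q} ∧ F p q = 0 ∧ F q p = 0 ∧ LinearIndependent ℝ ![p, q] := by
  obtain ⟨a, b, c, d, hab, hac, had, hbc, hbd, hcd, hSabcd⟩ := Set.ncard_eq_four.1 hcard
  obtain ⟨p, hp, p', hp', hpp', hdep⟩ := hS.exists_not_linearIndependent hE
    (by simp [hSabcd]) (by simp [hSabcd]) (by simp [hSabcd]) (by simp [hSabcd])
    hab hac had hbc hbd hcd
  obtain rfl := hanti p hp p' hp' hpp' hdep
  have hsub : {p, -p} ⊆ S := Set.insert_subset_iff.2 ⟨hp, Set.singleton_subset_iff.2 hp'⟩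
  obtain ⟨u, v, huv, huvS⟩ := Set.ncard_eq_two.1
    (by rw [Set.ncard_sdiff hsub, hcard, Set.ncard_pair hpp'] : (S \ {p, -p}).ncard = 2)
  have hu : u ∈ S \ {p, -p} := huvS ▸ by simp
  have hv : v ∈ S \ {p, -p} := huvS ▸ by simp
  simp only [Set.mem_sdiff, Set.mem_insert_iff, Set.mem_singleton_iff, not_or] at hu hv
  obtain ⟨hu, hup, hup'⟩ := hu
  have hpu := hS.apply_eq_zero_of_neg_mem (hneg p hp) hp hp' hu hup hup'
  have hpv := hS.apply_eq_zero_of_neg_mem (hneg p hp) hp hp' hv.1 hv.2.1 hv.2.2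
  obtain rfl := hanti u hu v hv.1 huv
    (not_linearIndependent_of_apply_eq_zero hE (F p) (hS.1 p hp).ne' hpu hpv)
  refine ⟨p, u, ?_, hpu, ?_, ?_⟩
  · rw [← Set.union_sdiff_cancel hsub, huvS]
    ext
    simp only [Set.mem_union, Set.mem_insert_iff, Set.mem_singleton_iff]
    tauto
  · exact hS.apply_eq_zero_of_neg_mem (hneg u hu) hu hv.1 hp (Ne.symm hup)
      (fun h => hup' (by rw [h, neg_neg]))
  · by_contra hdep
    exact hup' (hanti p hp u hu (Ne.symm hup) hdep)

end IsSeparatedBy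

end Separated

theorem separable_point_set_card_four_iff_auerbach_general
    (K : Set (EuclideanSpace ℝ (Fin 2)))
    (hconv : Convex ℝ K) (hint : (interior K).Nonempty)
    (hsymm : K = -K)
    (F : EuclideanSpace ℝ (Fin 2) → (EuclideanSpace ℝ (Fin 2) →L[ℝ] ℝ))
    (hFnorm : ∀ p ∈ frontier K, ‖F p‖ = 1)
    (hFsupp : ∀ p ∈ frontier K, ∀ x ∈ K, F p x ≤ F p p)
    (hsmooth : ∀ p ∈ frontier K, ∀ g : EuclideanSpace ℝ (Fin 2) →L[ℝ] ℝ,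
      ‖g‖ = 1 → (∀ x ∈ K, g x ≤ g p) → g = F p)
    (S : Set (EuclideanSpace ℝ (Fin 2))) (hS : S ⊆ frontier K)
    (hsep : ∀ x ∈ S, ∀ y ∈ S, x ≠ y →
      ¬ (x ∈ frontier K ∧ 0 < F y x ∧ F y x ≤ F y y)) :
    S.ncard = 4 ↔
      ∃ p q : EuclideanSpace ℝ (Fin 2), S = {p, -p, q, -q} ∧
        gauge K p = 1 ∧ gauge K q = 1 ∧ LinearIndependent ℝ ![p, q] ∧
        (∀ t : ℝ, gauge K p ≤ gauge K (p + t • q)) ∧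
        (∀ t : ℝ, gauge K q ≤ gauge K (q + t • p)) := by
  have hK : K ∈ 𝓝 0 := hconv.mem_nhds_zero_of_eq_neg hsymm hint
  have habs : Absorbent ℝ K := absorbent_nhds_zero hK
  have hnegK : ∀ x ∈ K, -x ∈ K := fun x hx => by rwa [hsymm, Set.neg_mem_neg]
  have hgauge : ∀ x ∈ frontier K, gauge K x = 1 := fun x hx =>
    (gauge_eq_one_iff_mem_frontier hconv hK).2 hx
  have hpos : ∀ x ∈ frontier K, 0 < F x x := fun x hx =>
    pos_of_forall_apply_le (f := (F x : _ →ₗ[ℝ] ℝ)) habs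
      (ContinuousLinearMap.coe_injective.ne (norm_ne_zero_iff.1 (hFnorm x hx ▸ one_ne_zero)))
      (hFsupp x hx)
  have hFneg : ∀ x ∈ frontier K, F (-x) = -F x := fun x hx =>
    eq_neg_of_unique_support hsymm (hFnorm x hx) (hFsupp x hx)
      (hsmooth (-x) (neg_mem_frontier_of_eq_neg hsymm hx))
  have hsepS : IsSeparatedBy (fun x => (F x : _ →ₗ[ℝ] ℝ)) S := by
    refine ⟨fun x hx => hpos x (hS hx), fun y hy x hx hyx => not_lt.1 fun h => ?_⟩
    refine hsep x hx y hy hyx.symm ⟨hS hx, h, ?_⟩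
    exact closure_minimal (hFsupp y (hS hy)) (isClosed_le (F y).continuous continuous_const)
      (frontier_subset_closure (hS hx))
  constructor
  · intro hcard
    obtain ⟨p, q, rfl, hpq, hqp, hlin⟩ := hsepS.exists_eq_antipodal_pairs_of_ncard_eq_four
      (by simp) (fun x hx => by simp [hFneg x (hS hx)])
      (fun x hx y hy hxy => eq_neg_of_not_linearIndependent hnegK (hgauge x (hS hx))
        (hgauge y (hS hy)) (hsepS.1 x hx) (hsepS.2 x hx y hy hxy)) hcard
    have hp : p ∈ frontier K := hS (by simp)
    have hq : q ∈ frontier K := hS (by simp)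
    exact ⟨p, q, rfl, hgauge p hp, hgauge q hq, hlin,
      gauge_le_gauge_add_smul_of_apply_eq_zero habs (hpos p hp) (hFsupp p hp) (hgauge p hp).le hpq,
      gauge_le_gauge_add_smul_of_apply_eq_zero habs (hpos q hq) (hFsupp q hq) (hgauge q hq).le hqp⟩
  · rintro ⟨p, q, rfl, -, -, hlin, -, -⟩
    exact ncard_eq_four_of_linearIndependent hlin

/-- For a smooth o-symmetric convex domain `K` in `ℝ²` (smoothness encoded by the
supporting-functional map `F`), a separable point set `S ⊆ ∂K` has cardinality `4` iff
`S = {p, -p, q, -q}` where `{p, q}` is an Auerbach basis of the normed plane whose unit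
ball is `K` (gauge norm), i.e. `p, q` are linearly independent unit vectors each Birkhoff
orthogonal to the other. -/
theorem separable_point_set_card_four_iff_auerbach
    (K : Set (EuclideanSpace ℝ (Fin 2)))
    (hconv : Convex ℝ K) (hcomp : IsCompact K) (hint : (interior K).Nonempty)
    (hsymm : K = -K)
    (F : EuclideanSpace ℝ (Fin 2) → (EuclideanSpace ℝ (Fin 2) →L[ℝ] ℝ))
    (hFnorm : ∀ p ∈ frontier K, ‖F p‖ = 1)
    (hFsupp : ∀ p ∈ frontier K, ∀ x ∈ K, F p x ≤ F p p)
    (hsmooth : ∀ p ∈ frontier K, ∀ g : EuclideanSpace ℝ (Fin 2) →L[ℝ] ℝ,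
      ‖g‖ = 1 → (∀ x ∈ K, g x ≤ g p) → g = F p)
    (S : Set (EuclideanSpace ℝ (Fin 2))) (hS : S ⊆ frontier K)
    (hsep : ∀ x ∈ S, ∀ y ∈ S, x ≠ y →
      ¬ (x ∈ frontier K ∧ 0 < F y x ∧ F y x ≤ F y y)) :
    S.ncard = 4 ↔
      ∃ p q : EuclideanSpace ℝ (Fin 2), S = {p, -p, q, -q} ∧
        gauge K p = 1 ∧ gauge K q = 1 ∧ LinearIndependent ℝ ![p, q] ∧
        (∀ t : ℝ, gauge K p ≤ gauge K (p + t • q)) ∧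
        (∀ t : ℝ, gauge K q ≤ gauge K (q + t • p)) :=
  separable_point_set_card_four_iff_auerbach_general K hconv hint hsymm F hFnorm hFsupp hsmooth S hS
    hsep
end

section
/- Let K₀ be a smooth o-symmetric convex body in ℝ^d, let p₁, p₂ ∈ ∂K₀ with p₂ ∉ C(p₁) and p₁ ∉ C(p₂). Then the unique supporting hyperplane T₁ of K₀ at p₁ separates 2p₁ + K₀ from both K₀ and 2p₂ + K₀ (i.e., 2p₁ + K₀ lies in one closed half-space of T₁, and both K₀ and 2p₂ + K₀ lie in the other). -/
open scoped Pointwise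

/-- For a smooth o-symmetric convex body `K` in `ℝ^d` (smoothness encoded by the
supporting-functional map `F`) and boundary points `p₁, p₂` with `p₂ ∉ C(p₁)` and
`p₁ ∉ C(p₂)`, the supporting hyperplane `{x | F p₁ x = F p₁ p₁}` at `p₁` separates
`2p₁ + K` from both `K` and `2p₂ + K`. -/
theorem support_hyperplane_separates_of_not_mem_caps {d : ℕ}
    (K : Set (EuclideanSpace ℝ (Fin d)))
    (hconv : Convex ℝ K) (hcomp : IsCompact K) (hint : (interior K).Nonempty)
    (hsymm : K = -K)
    (F : EuclideanSpace ℝ (Fin d) → (EuclideanSpace ℝ (Fin d) →L[ℝ] ℝ))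
    (hFnorm : ∀ p ∈ frontier K, ‖F p‖ = 1)
    (hFsupp : ∀ p ∈ frontier K, ∀ x ∈ K, F p x ≤ F p p)
    (hsmooth : ∀ p ∈ frontier K, ∀ g : EuclideanSpace ℝ (Fin d) →L[ℝ] ℝ,
      ‖g‖ = 1 → (∀ x ∈ K, g x ≤ g p) → g = F p)
    (p₁ p₂ : EuclideanSpace ℝ (Fin d))
    (hp₁ : p₁ ∈ frontier K) (hp₂ : p₂ ∈ frontier K)
    (hcap₁ : ¬ (p₂ ∈ frontier K ∧ 0 < F p₁ p₂ ∧ F p₁ p₂ ≤ F p₁ p₁))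
    (hcap₂ : ¬ (p₁ ∈ frontier K ∧ 0 < F p₂ p₁ ∧ F p₂ p₁ ≤ F p₂ p₂)) :
    (∀ x ∈ ((2 : ℝ) • p₁) +ᵥ K, F p₁ p₁ ≤ F p₁ x) ∧
    (∀ x ∈ K, F p₁ x ≤ F p₁ p₁) ∧
    (∀ x ∈ ((2 : ℝ) • p₂) +ᵥ K, F p₁ x ≤ F p₁ p₁) := by
  have hKclosed : IsClosed K := hcomp.isClosed
  have hsub : frontier K ⊆ K := hKclosed.frontier_subset
  have hneg : ∀ x ∈ K, -x ∈ K := by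
    intro x hx
    rw [hsymm]; exact Set.neg_mem_neg.mpr hx
  have hlow : ∀ x ∈ K, -(F p₁ p₁) ≤ F p₁ x := by
    intro x hx
    have := hFsupp p₁ hp₁ (-x) (hneg x hx)
    simp only [map_neg] at this
    linarith
  refine ⟨?_, hFsupp p₁ hp₁, ?_⟩
  · rintro x hx
    obtain ⟨k, hk, rfl⟩ := hx
    have := hlow k hk
    simp only [vadd_eq_add, map_add, map_smul, smul_eq_mul]
    linarith
  · have hle : F p₁ p₂ ≤ F p₁ p₁ := hFsupp p₁ hp₁ p₂ (hsub hp₂)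
    have hnp : F p₁ p₂ ≤ 0 := by
      by_contra h
      exact hcap₁ ⟨hp₂, lt_of_not_ge h, hle⟩
    rintro x hx
    obtain ⟨k, hk, rfl⟩ := hx
    have h1 := hFsupp p₁ hp₁ k hk
    simp only [vadd_eq_add, map_add, map_smul, smul_eq_mul]
    linarith
end

section
/- For every d-dimensional convex body K, the separable Hadwiger number satisfies H_sep(K) ≥ 2d: there exist 2d translates of K, all touching K, such that these translates together with K form a totally separable packing. -/
/-!
Choose chords `c k = P k - Q k` of `K` (with `P k, Q k ∈ K`) maximizing `det (c 1, …, c d)`.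
The functional `f k x = det (c 1, …, x, …, c d)` vanishes on the other chords, and maximality of
the determinant says that `K` lies in the slab `f k (Q k) ≤ f k ≤ f k (P k)`, whose width is
`f k (c k)`. So the `2d` translates `K ± c k` touch `K`, and in the `f k`-coordinate every member
of the family lies in the slab shifted by `0` or `± f k (c k)`. Hence the two faces of each slab
separate the corresponding translate from all other members without meeting any interior.
-/

open Set Function Filter Topology
open scoped Pointwise

theorem disjoint_interior_of_separates {X : Type*} [TopologicalSpace X] {f : X → ℝ} {a : ℝ}
    {A B : Set X} (hA : ∀ x ∈ A, f x ≤ a) (hB : ∀ x ∈ B, a ≤ f x)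
    (hAa : ∀ x ∈ interior A, f x ≠ a) : Disjoint (interior A) (interior B) :=
  Set.disjoint_left.2 fun x hxA hxB =>
    hAa x hxA ((hA x (interior_subset hxA)).antisymm (hB x (interior_subset hxB)))

namespace ContinuousLinearMap

variable {E : Type*} [AddCommGroup E] [TopologicalSpace E] [Module ℝ E] {K : Set E}
  {g : E →L[ℝ] ℝ} {a : ℝ} {s t : E}

theorem apply_le_of_mem_vadd (hK : MapsTo g K (Icc (a - g t) a)) (hs : g s ≤ 0) {x : E}
    (hx : x ∈ s +ᵥ K) : g x ≤ a := by
  obtain ⟨y, hy, rfl⟩ := hx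
  have := (hK hy).2
  simp only [vadd_eq_add, map_add]
  linarith

theorem le_apply_of_mem_vadd (hK : MapsTo g K (Icc (a - g t) a)) {x : E} (hx : x ∈ t +ᵥ K) :
    a ≤ g x := by
  obtain ⟨y, hy, rfl⟩ := hx
  have := (hK hy).1
  simp only [vadd_eq_add, map_add]
  linarith

variable [ContinuousAdd E] [ContinuousSMul ℝ E]

theorem mapsTo_interior_Ioo {l u : ℝ} (hg : g ≠ 0)
    (hK : MapsTo g K (Icc l u)) : MapsTo g (interior K) (Ioo l u) := by
  simpa only [interior_Icc] using (g.isOpenMap_of_ne_zero hg).mapsTo_interior hK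

theorem apply_ne_of_mem_interior_vadd (hg : g ≠ 0) (hK : MapsTo g K (Icc (a - g t) a))
    (hs : g s ≤ 0 ∨ g t ≤ g s) {x : E} (hx : x ∈ interior (s +ᵥ K)) : g x ≠ a := by
  rw [interior_vadd] at hx
  obtain ⟨y, hy, rfl⟩ := hx
  have := g.mapsTo_interior_Ioo hg hK hy
  simp only [vadd_eq_add, map_add]
  rcases hs with hs | hs
  · exact (by linarith [this.2] : g s + g y < a).ne
  · exact (by linarith [this.1] : a < g s + g y).ne'

end ContinuousLinearMap

open ContinuousLinearMap in
theorem totallySeparable_of_slabs {E : Type*} [AddCommGroup E] [TopologicalSpace E] [Module ℝ E]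
    [ContinuousAdd E] [ContinuousSMul ℝ E] {K : Set E} {ι : Type*} (c : ι → E)
    (hslab : ∀ i, ∃ (g : E →L[ℝ] ℝ) (a : ℝ), g ≠ 0 ∧ MapsTo g K (Icc (a - g (c i)) a) ∧
      ∀ j, j ≠ i → g (c j) ≤ 0) :
    (∀ i, Disjoint (interior (c i +ᵥ K)) (interior K)) ∧
      (∀ i j, i ≠ j → Disjoint (interior (c i +ᵥ K)) (interior (c j +ᵥ K))) ∧
      (∀ i, ∃ (f : E →L[ℝ] ℝ) (a : ℝ), f ≠ 0 ∧
        (∀ x ∈ K, f x ≤ a) ∧ (∀ x ∈ c i +ᵥ K, a ≤ f x) ∧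
        (∀ x ∈ interior K, f x ≠ a) ∧
        (∀ j, ∀ x ∈ interior (c j +ᵥ K), f x ≠ a)) ∧
      (∀ i j, i ≠ j → ∃ (f : E →L[ℝ] ℝ) (a : ℝ), f ≠ 0 ∧
        (∀ x ∈ c i +ᵥ K, f x ≤ a) ∧ (∀ x ∈ c j +ᵥ K, a ≤ f x) ∧
        (∀ x ∈ interior K, f x ≠ a) ∧
        (∀ k, ∀ x ∈ interior (c k +ᵥ K), f x ≠ a)) := by
  choose g a hg hK hc using hslab
  have avoids_K : ∀ i, ∀ x ∈ interior K, g i x ≠ a i := fun i x hx =>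
    apply_ne_of_mem_interior_vadd (s := 0) (hg i) (hK i) (by simp) (by simpa using hx)
  have avoids : ∀ i j, ∀ x ∈ interior (c j +ᵥ K), g i x ≠ a i := fun i j _ =>
    apply_ne_of_mem_interior_vadd (hg i) (hK i) <| by
      obtain rfl | hji := eq_or_ne j i
      exacts [.inr le_rfl, .inl (hc i j hji)]
  have below_K : ∀ i, ∀ x ∈ K, g i x ≤ a i := fun i x hx => (hK i hx).2
  have below : ∀ i j, j ≠ i → ∀ x ∈ c j +ᵥ K, g i x ≤ a i := fun i j hji _ =>
    apply_le_of_mem_vadd (hK i) (hc i j hji)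
  have above : ∀ i, ∀ x ∈ c i +ᵥ K, a i ≤ g i x := fun i _ => le_apply_of_mem_vadd (hK i)
  refine ⟨fun i => (disjoint_interior_of_separates (below_K i) (above i) (avoids_K i)).symm,
    fun i j hij => disjoint_interior_of_separates (below j i hij) (above j) (avoids j i),
    fun i => ⟨g i, a i, hg i, below_K i, above i, avoids_K i, avoids i⟩,
    fun i j hij => ⟨g j, a j, hg j, below j i hij, above j, avoids_K j, avoids j⟩⟩

namespace Module.Basis

variable {E : Type*} [AddCommGroup E] [TopologicalSpace E] [Module ℝ E] [ContinuousSMul ℝ E]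
  {ι : Type*} [Fintype ι] [DecidableEq ι] (b : Basis ι ℝ E)

theorem exists_det_pos_of_mem_nhds_zero {S : Set E} (hS : S ∈ 𝓝 0) :
    ∃ v : ι → E, (∀ k, v k ∈ S) ∧ 0 < b.det v := by
  have small_multiple : ∀ k, ∃ r : ℝ, 0 < r ∧ r • b k ∈ S := fun k => by
    have : Tendsto (fun r : ℝ => r • b k) (𝓝 0) (𝓝 0) := by
      simpa using (tendsto_id (x := 𝓝 (0 : ℝ))).smul_const (b k)
    exact ((this.eventually hS).filter_mono nhdsWithin_le_nhds |>.and
      (self_mem_nhdsWithin (s := Ioi 0))).exists.imp fun r h => ⟨h.2, h.1⟩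
  choose r hr hrS using small_multiple
  refine ⟨fun k => r k • b k, hrS, ?_⟩
  rw [b.det.map_smul_univ, Basis.det_self, smul_eq_mul, mul_one]
  exact Finset.prod_pos fun k _ => hr k

variable [IsTopologicalAddGroup E] [T2Space E] [FiniteDimensional ℝ E]

theorem continuous_det : Continuous fun v : ι → E => b.det v := by
  simp_rw [b.det_apply]
  refine Continuous.matrix_det (continuous_matrix fun i j => ?_)
  exact (b.coord i).continuous_of_finiteDimensional.comp (continuous_apply j)

theorem exists_det_isMaxOn {S : Set E} (hS : IsCompact S) (h0 : S ∈ 𝓝 0) :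
    ∃ c : ι → E, (∀ k, c k ∈ S) ∧ 0 < b.det c ∧
      ∀ k, ∀ y ∈ S, b.det (update c k y) ≤ b.det c := by
  obtain ⟨c, hc, hmax⟩ := (isCompact_univ_pi fun _ => hS).exists_isMaxOn
    ⟨fun _ => 0, fun _ _ => mem_of_mem_nhds h0⟩ b.continuous_det.continuousOn
  obtain ⟨v, hvS, hv⟩ := b.exists_det_pos_of_mem_nhds_zero h0
  refine ⟨c, fun k => hc k trivial, hv.trans_le (hmax fun k _ => hvS k), fun k y hy => hmax ?_⟩
  intro i _
  obtain rfl | hik := eq_or_ne i k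
  · simpa using hy
  · simpa [hik] using hc i trivial

noncomputable def detUpdate (c : ι → E) (k : ι) : E →L[ℝ] ℝ :=
  LinearMap.toContinuousLinearMap (b.det.toMultilinearMap.toLinearMap c k)

variable {b}

theorem detUpdate_apply (c : ι → E) (k : ι) (x : E) :
    b.detUpdate c k x = b.det (update c k x) :=
  rfl

theorem detUpdate_self (c : ι → E) (k : ι) : b.detUpdate c k (c k) = b.det c := by
  rw [detUpdate_apply, update_eq_self]

theorem detUpdate_of_ne (c : ι → E) {j k : ι} (h : j ≠ k) : b.detUpdate c k (c j) = 0 :=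
  b.det.map_eq_zero_of_eq _ (by simp [update_of_ne h]) h

end Module.Basis

section ConjugateChords

variable {E : Type*} [AddCommGroup E] [TopologicalSpace E] [Module ℝ E]

structure ConjugateChords (K : Set E) (ι : Type*) where
  top : ι → E
  bot : ι → E
  dual : ι → E →L[ℝ] ℝ
  top_mem : ∀ k, top k ∈ K
  bot_mem : ∀ k, bot k ∈ K
  dual_chord_of_ne : ∀ ⦃j k⦄, j ≠ k → dual k (top j - bot j) = 0
  dual_chord_pos : ∀ k, 0 < dual k (top k - bot k)
  mapsTo_dual : ∀ k, MapsTo (dual k) K (Icc (dual k (bot k)) (dual k (top k)))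

namespace ConjugateChords

variable {K : Set E} {ι : Type*} (C : ConjugateChords K ι)

def chord (k : ι) : E := C.top k - C.bot k

def translate : ι ⊕ ι → E := Sum.elim C.chord (-C.chord)

theorem dual_chord_eq_zero {j k : ι} (h : j ≠ k) : C.dual k (C.chord j) = 0 :=
  C.dual_chord_of_ne h

theorem dual_chord_nonneg (j k : ι) : 0 ≤ C.dual k (C.chord j) := by
  obtain rfl | h := eq_or_ne j k
  exacts [(C.dual_chord_pos j).le, (C.dual_chord_eq_zero h).ge]

theorem dual_ne_zero (k : ι) : C.dual k ≠ 0 :=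
  fun h => (C.dual_chord_pos k).ne' (by simp [h])

theorem vadd_inter_nonempty (i : ι ⊕ ι) : ((C.translate i +ᵥ K) ∩ K).Nonempty := by
  rcases i with k | k
  · exact ⟨C.top k, ⟨C.bot k, C.bot_mem k, by simp [translate, chord]⟩, C.top_mem k⟩
  · exact ⟨C.bot k, ⟨C.top k, C.top_mem k, by simp [translate, chord]⟩, C.bot_mem k⟩

theorem exists_slab (i : ι ⊕ ι) :
    ∃ (g : E →L[ℝ] ℝ) (a : ℝ), g ≠ 0 ∧ MapsTo g K (Icc (a - g (C.translate i)) a) ∧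
      ∀ j, j ≠ i → g (C.translate j) ≤ 0 := by
  rcases i with k | k
  · refine ⟨C.dual k, C.dual k (C.top k), ?_, ?_, ?_⟩
    · exact C.dual_ne_zero k
    · simpa [translate, chord] using C.mapsTo_dual k
    · rintro (j | j) h
      · simpa [translate] using (C.dual_chord_eq_zero (by simpa using h)).le
      · simpa [translate] using C.dual_chord_nonneg j k
  · refine ⟨-C.dual k, -C.dual k (C.bot k), ?_, ?_, ?_⟩
    · exact neg_ne_zero.2 (C.dual_ne_zero k)
    · intro x hx
      have := C.mapsTo_dual k hx
      simp only [translate, chord, Sum.elim_inr, Pi.neg_apply, map_neg, map_sub,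
        neg_apply, mem_Icc] at this ⊢
      constructor <;> linarith [this.1, this.2]
    · rintro (j | j) h
      · simpa [translate] using C.dual_chord_nonneg j k
      · simpa [translate] using (C.dual_chord_eq_zero (by simpa using h)).le

end ConjugateChords

theorem nonempty_conjugateChords [IsTopologicalAddGroup E] [ContinuousSMul ℝ E] [T2Space E]
    [FiniteDimensional ℝ E] {ι : Type*} [Fintype ι] [DecidableEq ι] (b : Module.Basis ι ℝ E)
    {K : Set E} (hK : IsCompact K) (hint : (interior K).Nonempty) :
    Nonempty (ConjugateChords K ι) := by
  obtain ⟨x₀, hx₀⟩ := hint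
  have hdiff : K - K ∈ 𝓝 0 := by
    rw [← sub_self x₀, ← mem_interior_iff_mem_nhds]
    exact subset_interior_sub_left (sub_mem_sub hx₀ (interior_subset hx₀))
  have hcomp : IsCompact (K - K) := by simpa only [sub_eq_add_neg] using hK.add hK.neg
  obtain ⟨c, hc, hpos, hmax⟩ := b.exists_det_isMaxOn hcomp hdiff
  choose P hP Q hQ hPQ using hc
  replace hPQ : ∀ k, P k - Q k = c k := hPQ
  have width_le : ∀ k, ∀ x ∈ K, ∀ y ∈ K, b.detUpdate c k x - b.detUpdate c k y ≤ b.det c :=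
    fun k x hx y hy => by
      rw [← map_sub, b.detUpdate_apply]
      exact hmax k _ (sub_mem_sub hx hy)
  have chord_eq : ∀ k, b.detUpdate c k (P k) - b.detUpdate c k (Q k) = b.det c := fun k => by
    rw [← map_sub, hPQ, b.detUpdate_self]
  refine ⟨⟨P, Q, b.detUpdate c, hP, hQ, fun j k h => ?_, fun k => ?_, fun k x hx => ⟨?_, ?_⟩⟩⟩
  · rw [hPQ, b.detUpdate_of_ne c h]
  · rwa [hPQ, b.detUpdate_self]
  · linarith [width_le k (P k) (hP k) x hx, chord_eq k]
  · linarith [width_le k x hx (Q k) (hQ k), chord_eq k]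

end ConjugateChords

theorem separable_hadwiger_number_ge_two_dim_general {d : ℕ}
    (K : Set (EuclideanSpace ℝ (Fin d)))
    (hcomp : IsCompact K) (hint : (interior K).Nonempty) :
    ∃ c : Fin (2 * d) → EuclideanSpace ℝ (Fin d),
      (∀ i, ((c i +ᵥ K) ∩ K).Nonempty ∧
        Disjoint (interior (c i +ᵥ K)) (interior K)) ∧
      (∀ i j, i ≠ j →
        Disjoint (interior (c i +ᵥ K)) (interior (c j +ᵥ K))) ∧
      (∀ i, ∃ (f : EuclideanSpace ℝ (Fin d) →L[ℝ] ℝ) (a : ℝ), f ≠ 0 ∧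
        (∀ x ∈ K, f x ≤ a) ∧ (∀ x ∈ c i +ᵥ K, a ≤ f x) ∧
        (∀ x ∈ interior K, f x ≠ a) ∧
        (∀ j, ∀ x ∈ interior (c j +ᵥ K), f x ≠ a)) ∧
      (∀ i j, i ≠ j → ∃ (f : EuclideanSpace ℝ (Fin d) →L[ℝ] ℝ) (a : ℝ), f ≠ 0 ∧
        (∀ x ∈ c i +ᵥ K, f x ≤ a) ∧ (∀ x ∈ c j +ᵥ K, a ≤ f x) ∧
        (∀ x ∈ interior K, f x ≠ a) ∧
        (∀ k, ∀ x ∈ interior (c k +ᵥ K), f x ≠ a)) := by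
  obtain ⟨C⟩ := nonempty_conjugateChords (EuclideanSpace.basisFun (Fin d) ℝ).toBasis hcomp hint
  let e : Fin (2 * d) ≃ Fin d ⊕ Fin d := (finSumFinEquiv.trans (finCongr (two_mul d).symm)).symm
  obtain ⟨disjoint_K, disjoint_pair, separated_K, separated_pair⟩ :=
    totallySeparable_of_slabs (K := K) (C.translate ∘ e) fun i => by
      obtain ⟨g, a, hg, hK, hnonpos⟩ := C.exists_slab (e i)
      exact ⟨g, a, hg, hK, fun j hji => hnonpos (e j) (e.injective.ne hji)⟩
  exact ⟨C.translate ∘ e, fun i => ⟨C.vadd_inter_nonempty (e i), disjoint_K i⟩, disjoint_pair,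
    separated_K, separated_pair⟩

/-- For every convex body `K` in `ℝ^d`, the separable Hadwiger number is at least `2d`:
there are `2d` translates of `K`, all touching `K` and pairwise non-overlapping, such
that any two members of the family consisting of `K` and these translates are separated
by a hyperplane `{f = a}` disjoint from the interiors of all members. -/
theorem separable_hadwiger_number_ge_two_dim {d : ℕ}
    (K : Set (EuclideanSpace ℝ (Fin d)))
    (hconv : Convex ℝ K) (hcomp : IsCompact K) (hint : (interior K).Nonempty) :
    ∃ c : Fin (2 * d) → EuclideanSpace ℝ (Fin d),
      (∀ i, ((c i +ᵥ K) ∩ K).Nonempty ∧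
        Disjoint (interior (c i +ᵥ K)) (interior K)) ∧
      (∀ i j, i ≠ j →
        Disjoint (interior (c i +ᵥ K)) (interior (c j +ᵥ K))) ∧
      (∀ i, ∃ (f : EuclideanSpace ℝ (Fin d) →L[ℝ] ℝ) (a : ℝ), f ≠ 0 ∧
        (∀ x ∈ K, f x ≤ a) ∧ (∀ x ∈ c i +ᵥ K, a ≤ f x) ∧
        (∀ x ∈ interior K, f x ≠ a) ∧
        (∀ j, ∀ x ∈ interior (c j +ᵥ K), f x ≠ a)) ∧
      (∀ i j, i ≠ j → ∃ (f : EuclideanSpace ℝ (Fin d) →L[ℝ] ℝ) (a : ℝ), f ≠ 0 ∧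
        (∀ x ∈ c i +ᵥ K, f x ≤ a) ∧ (∀ x ∈ c j +ᵥ K, a ≤ f x) ∧
        (∀ x ∈ interior K, f x ≠ a) ∧
        (∀ k, ∀ x ∈ interior (c k +ᵥ K), f x ≠ a)) :=
  separable_hadwiger_number_ge_two_dim_general K hcomp hint
end

section
/- Let n, v be positive integers with v ≤ n − 1, and let c_{n−v} be a nonnegative real with c_{n−v} ≤ 2(n−v) − 2√(n−v). If c ≤ c_{n−v} + 2v − 4 and 2c − 3n + 4 ≤ n − v, then c ≤ 2n − 2√n. -/
/-- Combining the induction inequalities in the contact number proof: from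
`c ≤ c_{n−v} + 2v − 4` with `c_{n−v} ≤ 2(n−v) − 2√(n−v)` and `2c − 3n + 4 ≤ n − v`
one obtains `c ≤ 2n − 2√n`. -/
theorem contact_number_induction_step (n v : ℕ) (hn : 0 < n) (hv : 0 < v)
    (hvn : v ≤ n - 1) (c cnv : ℝ) (hcnv0 : 0 ≤ cnv)
    (hcnv : cnv ≤ 2 * ((n : ℝ) - v) - 2 * Real.sqrt ((n : ℝ) - v))
    (hc1 : c ≤ cnv + 2 * v - 4)
    (hc2 : 2 * c - 3 * n + 4 ≤ (n : ℝ) - v) :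
    c ≤ 2 * n - 2 * Real.sqrt n := by
  have hnv1 : (1 : ℝ) ≤ (n : ℝ) - v := by
    have h' : v + 1 ≤ n := by omega
    have := (Nat.cast_le (α := ℝ)).mpr h'
    push_cast at this
    linarith
  set u := Real.sqrt (n : ℝ) with hu
  have hu0 : 0 ≤ u := Real.sqrt_nonneg _
  have hu2 : u ^ 2 = (n : ℝ) := Real.sq_sqrt (by positivity)
  set s := Real.sqrt ((n : ℝ) - v) with hs
  have hs0 : 0 ≤ s := Real.sqrt_nonneg _
  have hs2 : s ^ 2 = (n : ℝ) - v := Real.sq_sqrt (by linarith)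
  have hcs : c ≤ 2 * n - 4 - 2 * s := by
    have hvc : (2 : ℝ) * v = 2 * ((n : ℝ)) - 2 * ((n : ℝ) - v) := by ring
    linarith
  rcases le_or_gt (2 * c - 3 * n + 4) 0 with h | h
  · -- easy case: c ≤ (3n-4)/2 ≤ 2n - 2√n
    nlinarith [sq_nonneg (u - 2)]
  · set t := Real.sqrt (2 * c - 3 * n + 4) with ht
    have ht0 : 0 ≤ t := Real.sqrt_nonneg _
    have ht2 : t ^ 2 = 2 * c - 3 * n + 4 := Real.sq_sqrt (by linarith)
    have hts : t ≤ s := by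
      rw [ht, hs]
      exact Real.sqrt_le_sqrt hc2
    have hA : 2 * t ≤ 2 * (n : ℝ) - 4 - c := by linarith
    have hB : 4 * t ^ 2 ≤ (2 * (n : ℝ) - 4 - c) ^ 2 := by
      nlinarith [mul_nonneg (by linarith : (0:ℝ) ≤ 2 * (n : ℝ) - 4 - c - 2 * t)
        (by linarith : (0:ℝ) ≤ 2 * (n : ℝ) - 4 - c + 2 * t)]
    have hC : 4 * (n : ℝ) ≤ (2 * (n : ℝ) - c) ^ 2 := by nlinarith
    have h0 : 0 ≤ 2 * (n : ℝ) - c := by linarith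
    have hsq : (2 * u) ^ 2 ≤ (2 * (n : ℝ) - c) ^ 2 := by nlinarith
    have := (pow_le_pow_iff_left₀ (by positivity) h0 (two_ne_zero)).mp hsq
    linarith
end

section
/- For p, q on the boundary of a smooth o-symmetric convex body K₀ in ℝ^d, if K₀, 2p + K₀, and 2q + K₀ form a totally separable packing, then q does not lie in the cap C(p) and p does not lie in the cap C(q). -/
open scoped Pointwise

section Aux

variable {d : ℕ}

private lemma aux_zero_mem {K : Set (EuclideanSpace ℝ (Fin d))}
    (hconv : Convex ℝ K) (hint : (interior K).Nonempty) (hsymm : K = -K) :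
    (0 : EuclideanSpace ℝ (Fin d)) ∈ interior K := by
  obtain ⟨x, hx⟩ := hint
  have hnx : -x ∈ interior K := by
    have h := (Homeomorph.neg (EuclideanSpace ℝ (Fin d))).preimage_interior K
    have h2 : -x ∈ Neg.neg ⁻¹' interior K := by
      simp only [Set.mem_preimage, neg_neg]; exact hx
    have h3 : (Homeomorph.neg (EuclideanSpace ℝ (Fin d))) ⁻¹' interior K
        = Neg.neg ⁻¹' interior K := rfl
    rw [← h3, h] at h2
    have h4 : (Homeomorph.neg (EuclideanSpace ℝ (Fin d))) ⁻¹' K = -K := rfl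
    rw [h4, ← hsymm] at h2
    exact h2
  have h := hconv.interior hx hnx (by norm_num : (0:ℝ) ≤ 1/2)
    (by norm_num : (0:ℝ) ≤ 1/2) (by norm_num)
  have : (1/2 : ℝ) • x + (1/2 : ℝ) • (-x) = (0 : EuclideanSpace ℝ (Fin d)) := by
    rw [smul_neg, add_neg_cancel]
  rwa [this] at h

private lemma aux_neg_mem {K : Set (EuclideanSpace ℝ (Fin d))} (hsymm : K = -K)
    {x : EuclideanSpace ℝ (Fin d)} (hx : x ∈ K) : -x ∈ K := by
  rw [hsymm] at hx; exact Set.mem_neg.mp hx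

/-- If `0 ∈ interior K` and `x ∈ K`, then `t • x ∈ interior K` for `|t| < 1`. -/
private lemma aux_smul_mem {K : Set (EuclideanSpace ℝ (Fin d))}
    (hconv : Convex ℝ K) (hsymm : K = -K)
    (h0 : (0 : EuclideanSpace ℝ (Fin d)) ∈ interior K)
    {x : EuclideanSpace ℝ (Fin d)} (hx : x ∈ K) {t : ℝ} (ht : |t| < 1) :
    t • x ∈ interior K := by
  rcases le_or_gt 0 t with h | h
  · rw [abs_of_nonneg h] at ht
    have := hconv.combo_interior_closure_mem_interior h0 (subset_closure hx)
      (by linarith : (0:ℝ) < 1 - t) h (by ring)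
    simpa using this
  · rw [abs_of_neg h] at ht
    have := hconv.combo_interior_closure_mem_interior h0
      (subset_closure (aux_neg_mem hsymm hx))
      (by linarith : (0:ℝ) < 1 - (-t)) (by linarith : (0:ℝ) ≤ -t) (by ring)
    have heq : (1 - -t) • (0 : EuclideanSpace ℝ (Fin d)) + (-t) • (-x) = t • x := by
      rw [smul_zero, zero_add, smul_neg, neg_smul, neg_neg]
    rwa [heq] at this

/-- Any sup over K of a nonzero functional is positive. -/
private lemma aux_pos_sup {K : Set (EuclideanSpace ℝ (Fin d))}
    (h0 : (0 : EuclideanSpace ℝ (Fin d)) ∈ interior K)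
    {g : EuclideanSpace ℝ (Fin d) →L[ℝ] ℝ} (hg0 : g ≠ 0)
    {c : ℝ} (hsup : ∀ x ∈ K, g x ≤ c) : 0 < c := by
  obtain ⟨v, hv⟩ : ∃ v, g v ≠ 0 := by
    by_contra h
    push_neg at h
    exact hg0 (ContinuousLinearMap.ext fun v => by simp [h v])
  obtain ⟨ε, hε, hball⟩ := Metric.mem_nhds_iff.mp (mem_interior_iff_mem_nhds.mp h0)
  have hvnorm : (0:ℝ) < ‖v‖ := norm_pos_iff.mpr (fun h => hv (by simp [h]))
  set r : ℝ := ε / (2 * ‖v‖) with hr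
  have hrpos : 0 < r := by positivity
  have hnorm : ‖r • v‖ < ε := by
    have heq : ‖r • v‖ = ε / 2 := by
      rw [norm_smul r v, Real.norm_eq_abs, abs_of_pos hrpos, hr]
      field_simp
    rw [heq]; linarith
  have hmem : r • v ∈ K := hball (by simpa [Metric.mem_ball, dist_eq_norm] using hnorm)
  have hmem' : -(r • v) ∈ K := hball (by simpa [Metric.mem_ball, dist_eq_norm] using hnorm)
  have hgu : g (r • v) = r * g v := by simp
  rcases lt_trichotomy (g v) 0 with h | h | h
  · have := hsup _ hmem'
    have h2 : g (-(r • v)) = -(r * g v) := by simp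
    nlinarith
  · exact absurd h hv
  · have := hsup _ hmem
    nlinarith

/-- Normalization via smoothness: a functional supporting K at boundary point r is a
positive multiple of `F r`. -/
private lemma aux_normalize {K : Set (EuclideanSpace ℝ (Fin d))}
    {F : EuclideanSpace ℝ (Fin d) → (EuclideanSpace ℝ (Fin d) →L[ℝ] ℝ)}
    (hsmooth : ∀ p ∈ frontier K, ∀ g : EuclideanSpace ℝ (Fin d) →L[ℝ] ℝ,
      ‖g‖ = 1 → (∀ x ∈ K, g x ≤ g p) → g = F p)
    {g : EuclideanSpace ℝ (Fin d) →L[ℝ] ℝ} (hg0 : g ≠ 0)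
    {r : EuclideanSpace ℝ (Fin d)} (hr : r ∈ frontier K)
    (hsup : ∀ x ∈ K, g x ≤ g r) : ∀ x, g x = ‖g‖ * F r x := by
  have hn : ‖g‖ ≠ 0 := norm_ne_zero_iff.mpr hg0
  have hnpos : 0 < ‖g‖ := norm_pos_iff.mpr hg0
  have h1 : ‖(‖g‖⁻¹ • g : EuclideanSpace ℝ (Fin d) →L[ℝ] ℝ)‖ = 1 := by
    rw [norm_smul _ g, Real.norm_eq_abs, abs_of_pos (by positivity : (0:ℝ) < ‖g‖⁻¹),
      inv_mul_cancel₀ hn]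
  have h2 : ∀ x ∈ K, (‖g‖⁻¹ • g) x ≤ (‖g‖⁻¹ • g) r := by
    intro x hx
    simp only [ContinuousLinearMap.smul_apply, smul_eq_mul]
    exact mul_le_mul_of_nonneg_left (hsup x hx) (by positivity)
  have heq := hsmooth r hr _ h1 h2
  intro x
  have h3 := DFunLike.congr_fun heq x
  simp only [ContinuousLinearMap.smul_apply, smul_eq_mul] at h3
  rw [← h3]
  field_simp

/-- Main auxiliary lemma: the one-sided statement. -/
private lemma aux_main {K : Set (EuclideanSpace ℝ (Fin d))}
    (hconv : Convex ℝ K) (hcomp : IsCompact K) (hint : (interior K).Nonempty)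
    (hsymm : K = -K)
    {F : EuclideanSpace ℝ (Fin d) → (EuclideanSpace ℝ (Fin d) →L[ℝ] ℝ)}
    (hFnorm : ∀ p ∈ frontier K, ‖F p‖ = 1)
    (hFsupp : ∀ p ∈ frontier K, ∀ x ∈ K, F p x ≤ F p p)
    (hsmooth : ∀ p ∈ frontier K, ∀ g : EuclideanSpace ℝ (Fin d) →L[ℝ] ℝ,
      ‖g‖ = 1 → (∀ x ∈ K, g x ≤ g p) → g = F p)
    {p q : EuclideanSpace ℝ (Fin d)}
    (hp : p ∈ frontier K) (hq : q ∈ frontier K)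
    (h1 : ∃ (g : EuclideanSpace ℝ (Fin d) →L[ℝ] ℝ) (a : ℝ), g ≠ 0 ∧
      (∀ x ∈ K, g x ≤ a) ∧ (∀ x ∈ ((2:ℝ) • p) +ᵥ K, a ≤ g x) ∧
      (∀ x ∈ ((2:ℝ) • q) +ᵥ interior K, g x ≠ a))
    (h2 : ∃ (g : EuclideanSpace ℝ (Fin d) →L[ℝ] ℝ) (a : ℝ), g ≠ 0 ∧
      (∀ x ∈ ((2:ℝ) • p) +ᵥ K, g x ≤ a) ∧ (∀ x ∈ ((2:ℝ) • q) +ᵥ K, a ≤ g x) ∧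
      (∀ x ∈ interior K, g x ≠ a)) :
    ¬ (0 < F p q ∧ F p q ≤ F p p) := by
  rintro ⟨hpos, hle⟩
  have hKclosed : IsClosed K := hcomp.isClosed
  have hpK : p ∈ K := hKclosed.frontier_subset hp
  have hqK : q ∈ K := hKclosed.frontier_subset hq
  have h0 : (0 : EuclideanSpace ℝ (Fin d)) ∈ interior K := aux_zero_mem hconv hint hsymm
  have hFp0 : F p ≠ 0 := by
    intro h; have := hFnorm p hp; rw [h] at this; simp at this
  have hs : 0 < F p p := aux_pos_sup h0 hFp0 (hFsupp p hp)
  -- membership of p in 2p + K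
  have hpmem : p ∈ ((2:ℝ) • p) +ᵥ K := by
    have : ((2:ℝ) • p) +ᵥ (-p) ∈ ((2:ℝ) • p) +ᵥ K :=
      Set.vadd_mem_vadd_set (aux_neg_mem hsymm hpK)
    have heq : ((2:ℝ) • p) +ᵥ (-p) = p := by
      rw [vadd_eq_add, two_smul]; abel
    rwa [heq] at this
  -- Step 1 : F p q = F p p
  have hstep1 : F p q = F p p := by
    by_contra hne
    have hlt : F p q < F p p := lt_of_le_of_ne hle hne
    obtain ⟨g, a, hg0, hKle, hB1ge, havoid⟩ := h1
    have hga : g p = a := le_antisymm (hKle p hpK) (hB1ge p hpmem)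
    have hsupg : ∀ x ∈ K, g x ≤ g p := fun x hx => (hKle x hx).trans hga.ge
    have hgF := aux_normalize hsmooth hg0 hp hsupg
    have hnpos : 0 < ‖g‖ := norm_pos_iff.mpr hg0
    set c : ℝ := F p p - 2 * F p q with hc
    have hc1 : -F p p < c := by rw [hc]; linarith
    have hc2 : c < F p p := by rw [hc]; linarith
    set t : ℝ := c / F p p with htdef
    have ht : |t| < 1 := by
      rw [htdef, abs_div, abs_of_pos hs, div_lt_one hs, abs_lt]
      exact ⟨hc1, hc2⟩
    have hy : t • p ∈ interior K := aux_smul_mem hconv hsymm h0 hpK ht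
    have hxmem : ((2:ℝ) • q) +ᵥ (t • p) ∈ ((2:ℝ) • q) +ᵥ interior K :=
      Set.vadd_mem_vadd_set hy
    apply havoid _ hxmem
    have hFval : F p (((2:ℝ) • q) +ᵥ (t • p)) = F p p := by
      rw [vadd_eq_add, map_add, map_smul, map_smul]
      simp only [smul_eq_mul]
      have : t * F p p = c := div_mul_cancel₀ c hs.ne'
      rw [this, hc]; ring
    rw [hgF, hFval, ← hga, hgF]
  -- Step 2 : F p = F q
  have hstep2 : F p = F q := by
    apply hsmooth q hq _ (hFnorm p hp)
    intro x hx
    calc F p x ≤ F p p := hFsupp p hp x hx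
      _ = F p q := hstep1.symm
  -- Step 3 : contradiction from the separation of 2p+K and 2q+K
  obtain ⟨g, a, hg0, hB1le, hB2ge, havoid⟩ := h2
  obtain ⟨x₀, hx₀K, hmax⟩ := hcomp.exists_isMaxOn ⟨p, hpK⟩ g.continuous.continuousOn
  have hmax' : ∀ x ∈ K, g x ≤ g x₀ := fun x hx => hmax hx
  set m : ℝ := g x₀ with hm
  have hmpos : 0 < m := aux_pos_sup h0 hg0 hmax'
  have hmin : ∀ x ∈ K, -m ≤ g x := by
    intro x hx
    have := hmax' _ (aux_neg_mem hsymm hx)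
    rw [map_neg] at this; linarith
  have hcon1 : 2 * g p + m ≤ a := by
    have := hB1le _ (Set.vadd_mem_vadd_set (s := K) hx₀K)
    rwa [vadd_eq_add, map_add, map_smul, smul_eq_mul] at this
  have hcon2 : a ≤ 2 * g q - m := by
    have := hB2ge _ (Set.vadd_mem_vadd_set (s := K) (aux_neg_mem hsymm hx₀K))
    rw [vadd_eq_add, map_add, map_smul, smul_eq_mul, map_neg] at this
    linarith
  have hgp_le : g p ≤ m := hmax' p hpK
  have hgq_le : g q ≤ m := hmax' q hqK
  have hgp_ge : -m ≤ g p := hmin p hpK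
  -- a avoids the open interval (-m, m)
  have hcases : m ≤ a ∨ a ≤ -m := by
    by_contra h
    push_neg at h
    obtain ⟨h₁, h₂⟩ := h
    set t : ℝ := a / m with htdef
    have ht : |t| < 1 := by
      rw [htdef, abs_div, abs_of_pos hmpos, div_lt_one hmpos, abs_lt]
      constructor <;> linarith
    have hy : t • x₀ ∈ interior K := aux_smul_mem hconv hsymm h0 hx₀K ht
    apply havoid _ hy
    rw [map_smul, smul_eq_mul, ← hm]
    exact div_mul_cancel₀ a hmpos.ne'
  rcases hcases with hcase | hcase
  · -- then g attains its max at q, so g = ‖g‖ • F q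
    have hgq : g q = m := le_antisymm hgq_le (by linarith)
    have hsupq : ∀ x ∈ K, g x ≤ g q := fun x hx => by rw [hgq]; exact hmax' x hx
    have hgF := aux_normalize hsmooth hg0 hq hsupq
    have hgp_eq : g p = g q := by
      rw [hgF p, hgF q, ← hstep2, hstep1]
    linarith
  · -- then -g attains its max at p, so -g = ‖g‖ • F p
    have hgp : g p = -m := le_antisymm (by linarith) hgp_ge
    have hng0 : (-g : EuclideanSpace ℝ (Fin d) →L[ℝ] ℝ) ≠ 0 := neg_ne_zero.mpr hg0
    have hsupp' : ∀ x ∈ K, (-g) x ≤ (-g) p := by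
      intro x hx
      simp only [ContinuousLinearMap.neg_apply]
      have := hmin x hx
      rw [hgp]; linarith
    have hgF := aux_normalize hsmooth hng0 hp hsupp'
    have hgp_eq : g p = g q := by
      have h1 := hgF p
      have h2 := hgF q
      simp only [ContinuousLinearMap.neg_apply, norm_neg] at h1 h2
      rw [hstep1] at h2
      linarith
    linarith

end Aux

/-- For a smooth o-symmetric convex body `K` in `ℝ^d` (smoothness encoded by the
supporting-functional map `F`) and boundary points `p, q`: if `K`, `2p + K` and `2q + K`
form a totally separable packing (pairwise disjoint interiors and any two members are
separated by a hyperplane `{g = a}` disjoint from the interiors of all three), then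
`q ∉ C(p)` and `p ∉ C(q)`, where `C(x) = {z ∈ ∂K | 0 < F x z ∧ F x z ≤ F x x}`. -/
theorem not_mem_caps_of_totally_separable {d : ℕ}
    (K : Set (EuclideanSpace ℝ (Fin d)))
    (hconv : Convex ℝ K) (hcomp : IsCompact K) (hint : (interior K).Nonempty)
    (hsymm : K = -K)
    (F : EuclideanSpace ℝ (Fin d) → (EuclideanSpace ℝ (Fin d) →L[ℝ] ℝ))
    (hFnorm : ∀ p ∈ frontier K, ‖F p‖ = 1)
    (hFsupp : ∀ p ∈ frontier K, ∀ x ∈ K, F p x ≤ F p p)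
    (hsmooth : ∀ p ∈ frontier K, ∀ g : EuclideanSpace ℝ (Fin d) →L[ℝ] ℝ,
      ‖g‖ = 1 → (∀ x ∈ K, g x ≤ g p) → g = F p)
    (p q : EuclideanSpace ℝ (Fin d))
    (hp : p ∈ frontier K) (hq : q ∈ frontier K)
    (B : Fin 3 → Set (EuclideanSpace ℝ (Fin d)))
    (hB : B 0 = K ∧ B 1 = ((2 : ℝ) • p) +ᵥ K ∧ B 2 = ((2 : ℝ) • q) +ᵥ K)
    (hpack : ∀ i j, i ≠ j → Disjoint (interior (B i)) (interior (B j)))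
    (hsep : ∀ i j, i ≠ j →
      ∃ (g : EuclideanSpace ℝ (Fin d) →L[ℝ] ℝ) (a : ℝ), g ≠ 0 ∧
        (∀ x ∈ B i, g x ≤ a) ∧ (∀ x ∈ B j, a ≤ g x) ∧
        (∀ k, ∀ x ∈ interior (B k), g x ≠ a)) :
    ¬ (q ∈ frontier K ∧ 0 < F p q ∧ F p q ≤ F p p) ∧
    ¬ (p ∈ frontier K ∧ 0 < F q p ∧ F q p ≤ F q q) := by
  obtain ⟨hB0, hB1, hB2⟩ := hB
  constructor
  · rintro ⟨-, hpos, hle⟩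
    refine aux_main hconv hcomp hint hsymm hFnorm hFsupp hsmooth hp hq ?_ ?_ ⟨hpos, hle⟩
    · obtain ⟨g, a, hg0, hle', hge', havoid⟩ := hsep 0 1 (by decide)
      refine ⟨g, a, hg0, by rwa [hB0] at hle', by rwa [hB1] at hge', ?_⟩
      intro x hx
      apply havoid 2
      rw [hB2, interior_vadd]
      exact hx
    · obtain ⟨g, a, hg0, hle', hge', havoid⟩ := hsep 1 2 (by decide)
      refine ⟨g, a, hg0, by rwa [hB1] at hle', by rwa [hB2] at hge', ?_⟩
      intro x hx
      apply havoid 0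
      rw [hB0]
      exact hx
  · rintro ⟨-, hpos, hle⟩
    refine aux_main hconv hcomp hint hsymm hFnorm hFsupp hsmooth hq hp ?_ ?_ ⟨hpos, hle⟩
    · obtain ⟨g, a, hg0, hle', hge', havoid⟩ := hsep 0 2 (by decide)
      refine ⟨g, a, hg0, by rwa [hB0] at hle', by rwa [hB2] at hge', ?_⟩
      intro x hx
      apply havoid 1
      rw [hB1, interior_vadd]
      exact hx
    · obtain ⟨g, a, hg0, hle', hge', havoid⟩ := hsep 2 1 (by decide)
      refine ⟨g, a, hg0, by rwa [hB2] at hle', by rwa [hB1] at hge', ?_⟩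
      intro x hx
      apply havoid 0
      rw [hB0]
      exact hx
end
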